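/- arXiv:1312.2299 — 11 statements merged into one kernel-verified Lean document; each statement's English description precedes it below -/
import Mathlib

section
/- Let n ≥ 2 be an integer, let S : ℝ → ℝ be nonincreasing on [0,1] with S(1) = 0 and S(t) ≥ 0 for all t ∈ [0,1], and let w : {1,…,n} → ℝ be nonincreasing (w_1 ≥ w_2 ≥ … ≥ w_n) with an index k ∈ {0,…,n} such that w_i ≥ 0 for all i ≤ k and w_i < 0 for all i > k. For any badge assignment r : {1,…,n} → ℕ and each i, define t_i(r) = |{j ≠ i : r_j ≥ r_i}| / (n−1). Then for every badge assignment r, ∑_{i=1}^{n} w_i · S(t_i(r)) ≤ ∑_{i=1}^{k} w_i · S((i−1)/(n−1)); that is, the virtual surplus is maximized by assigning distinct decreasing badges to the k users with nonnegative weight and a common lowest badge to all users with negative weight. -/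
/-!
The user with the lowest badge among any set `A` of users sees the other `|A| - 1` members of `A`
weakly above them, so, inductively, the status values of `A` add up to at most
`S(0/(n-1)) + ⋯ + S((|A|-1)/(n-1))`. Applied to the initial segments of users, this says that the
prefix sums of `S(tᵢ(r))` are dominated by those of `S((i-1)/(n-1))`, and Abel summation carries
this over to the nonincreasing nonnegative weights `max wᵢ 0`. These dominate the `wᵢ` because
`S ≥ 0`, and they vanish beyond `k`.
-/

open Finset

/-- The status fraction of user `i` under badge assignment `r`:
the fraction of the other `n - 1` users holding a weakly higher badge. -/
noncomputable def statusFrac (n : ℕ) (r : Fin n → ℕ) (i : Fin n) : ℝ :=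
  ((Finset.univ.filter (fun j => j ≠ i ∧ r i ≤ r j)).card : ℝ) / (n - 1)

lemma sum_mul_le_sum_mul_of_sum_filter_le {ι R : Type*} [LinearOrder ι] [Ring R] [PartialOrder R]
    [IsOrderedRing R] (s : Finset ι) {v x y : ι → R} (hv : AntitoneOn v s)
    (hv_nonneg : ∀ i ∈ s, 0 ≤ v i)
    (hxy : ∀ j ∈ s, ∑ i ∈ s with i ≤ j, x i ≤ ∑ i ∈ s with i ≤ j, y i) :
    ∑ i ∈ s, v i * x i ≤ ∑ i ∈ s, v i * y i := by
  induction s using Finset.induction_on_max generalizing v with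
  | empty => simp
  | insert a s ha ih =>
    have ha' : a ∉ s := fun h => lt_irrefl a (ha a h)
    have decompose : ∀ z : ι → R, ∑ i ∈ insert a s, v i * z i
        = ∑ i ∈ s, (v i - v a) * z i + v a * ∑ i ∈ insert a s, z i := by
      intro z
      simp only [sum_insert ha', sub_mul, sum_sub_distrib, ← mul_sum, mul_add]
      abel
    have hs : ∑ i ∈ s, (v i - v a) * x i ≤ ∑ i ∈ s, (v i - v a) * y i := by
      refine ih (fun i hi j hj hij => sub_le_sub_right (hv (mem_insert_of_mem hi)
        (mem_insert_of_mem hj) hij) _) (fun i hi => sub_nonneg.2 (hv (mem_insert_of_mem hi)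
        (mem_insert_self a s) (ha i hi).le)) (fun j hj => ?_)
      have := hxy j (mem_insert_of_mem hj)
      rwa [filter_insert, if_neg (ha j hj).not_ge] at this
    have htotal : ∑ i ∈ insert a s, x i ≤ ∑ i ∈ insert a s, y i := by
      have := hxy a (mem_insert_self a s)
      rwa [filter_true_of_mem fun i hi => ?_] at this
      rcases mem_insert.1 hi with rfl | hi
      exacts [le_rfl, (ha i hi).le]
    rw [decompose x, decompose y]
    exact add_le_add hs (mul_le_mul_of_nonneg_left htotal (hv_nonneg a (mem_insert_self a s)))

lemma Fin.sum_Iic_eq_sum_range {M : Type*} [AddCommMonoid M] {n : ℕ} (f : ℕ → M) (j : Fin n) :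
    ∑ i ∈ Iic j, f i = ∑ m ∈ range (j + 1), f m := by
  rw [Nat.range_succ_eq_Iic, ← Fin.map_valEmbedding_Iic, sum_map, Fin.valEmbedding_apply]

lemma statusFrac_mem_Icc {n : ℕ} (r : Fin n → ℕ) (i : Fin n) :
    statusFrac n r i ∈ Set.Icc (0 : ℝ) 1 := by
  have hn : (0 : ℝ) ≤ n - 1 := sub_nonneg.2 (Nat.one_le_cast.2 i.pos)
  have hsub : univ.filter (fun j => j ≠ i ∧ r i ≤ r j) ⊆ univ.erase i := fun j hj =>
    mem_erase.2 ⟨(mem_filter.1 hj).2.1, mem_univ j⟩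
  have hcard := card_le_card hsub
  rw [card_erase_of_mem (mem_univ i), card_univ, Fintype.card_fin] at hcard
  refine ⟨div_nonneg (Nat.cast_nonneg _) hn, div_le_one_of_le₀ ?_ hn⟩
  rw [← Nat.cast_pred i.pos]
  exact_mod_cast hcard

lemma card_div_le_statusFrac {n : ℕ} {r : Fin n → ℕ} {i : Fin n} {s : Finset (Fin n)}
    (hi : i ∉ s) (hmin : ∀ j ∈ s, r i ≤ r j) : (#s : ℝ) / (n - 1) ≤ statusFrac n r i := by
  have hsub : s ⊆ univ.filter (fun j => j ≠ i ∧ r i ≤ r j) := fun j hj =>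
    mem_filter.2 ⟨mem_univ j, ne_of_mem_of_not_mem hj hi, hmin j hj⟩
  exact div_le_div_of_nonneg_right (by exact_mod_cast card_le_card hsub)
    (sub_nonneg.2 (Nat.one_le_cast.2 i.pos))

lemma sum_status_le_sum_range {n : ℕ} {S : ℝ → ℝ} (hS : AntitoneOn S (Set.Icc 0 1))
    (r : Fin n → ℕ) (A : Finset (Fin n)) :
    ∑ i ∈ A, S (statusFrac n r i) ≤ ∑ m ∈ range #A, S (m / (n - 1)) := by
  induction A using Finset.induction_on_min_value r with
  | empty => simp
  | insert i s hi hmin ih =>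
    have hlow := card_div_le_statusFrac hi hmin
    have hmem : (#s : ℝ) / (n - 1) ∈ Set.Icc (0 : ℝ) 1 :=
      ⟨div_nonneg (Nat.cast_nonneg _) (sub_nonneg.2 (Nat.one_le_cast.2 i.pos)),
        hlow.trans (statusFrac_mem_Icc r i).2⟩
    rw [sum_insert hi, card_insert_of_notMem hi, sum_range_succ, add_comm]
    exact add_le_add ih (hS hmem (statusFrac_mem_Icc r i) hlow)

theorem virtual_surplus_maximizing_badge_allocation_general
    (n : ℕ)
    (S : ℝ → ℝ)
    (hS_anti : AntitoneOn S (Set.Icc 0 1))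
    (hS_nonneg : ∀ t ∈ Set.Icc (0:ℝ) 1, 0 ≤ S t)
    (w : Fin n → ℝ)
    (hw_anti : ∀ i j : Fin n, i ≤ j → w j ≤ w i)
    (k : ℕ)
    (hw_nonneg : ∀ i : Fin n, (i : ℕ) < k → 0 ≤ w i)
    (hw_neg : ∀ i : Fin n, k ≤ (i : ℕ) → w i < 0) :
    ∀ r : Fin n → ℕ,
      ∑ i, w i * S (statusFrac n r i) ≤
        ∑ i ∈ Finset.univ.filter (fun i : Fin n => (i : ℕ) < k),
          w i * S ((i : ℕ) / (n - 1)) := by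
  intro r
  have hprefix : ∀ j ∈ univ, ∑ i ∈ univ with i ≤ j, S (statusFrac n r i)
      ≤ ∑ i ∈ univ with i ≤ j, S ((i : ℕ) / (n - 1)) := fun j _ => by
    rw [filter_ge_eq_Iic, Fin.sum_Iic_eq_sum_range (fun m => S (m / (n - 1))), ← Fin.card_Iic]
    exact sum_status_le_sum_range hS_anti r (Iic j)
  calc ∑ i, w i * S (statusFrac n r i)
      ≤ ∑ i, max (w i) 0 * S (statusFrac n r i) := sum_le_sum fun i _ =>
        mul_le_mul_of_nonneg_right (le_max_left _ _) (hS_nonneg _ (statusFrac_mem_Icc r i))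
    _ ≤ ∑ i, max (w i) 0 * S ((i : ℕ) / (n - 1)) :=
        sum_mul_le_sum_mul_of_sum_filter_le univ
          (fun i _ j _ hij => max_le_max (hw_anti i j hij) le_rfl)
          (fun i _ => le_max_right _ _) hprefix
    _ = _ := by
        rw [sum_filter]
        refine sum_congr rfl fun i _ => ?_
        split_ifs with hi
        · rw [max_eq_left (hw_nonneg i hi)]
        · rw [max_eq_right (hw_neg i (not_lt.1 hi)).le, zero_mul]

theorem virtual_surplus_maximizing_badge_allocation
    (n : ℕ) (hn : 2 ≤ n)
    (S : ℝ → ℝ)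
    (hS_anti : AntitoneOn S (Set.Icc 0 1))
    (hS1 : S 1 = 0)
    (hS_nonneg : ∀ t ∈ Set.Icc (0:ℝ) 1, 0 ≤ S t)
    (w : Fin n → ℝ)
    (hw_anti : ∀ i j : Fin n, i ≤ j → w j ≤ w i)
    (k : ℕ) (hk : k ≤ n)
    (hw_nonneg : ∀ i : Fin n, (i : ℕ) < k → 0 ≤ w i)
    (hw_neg : ∀ i : Fin n, k ≤ (i : ℕ) → w i < 0) :
    ∀ r : Fin n → ℕ,
      ∑ i, w i * S (statusFrac n r i) ≤
        ∑ i ∈ Finset.univ.filter (fun i : Fin n => (i : ℕ) < k),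
          w i * S ((i : ℕ) / (n - 1)) :=
  virtual_surplus_maximizing_badge_allocation_general n S hS_anti hS_nonneg w hw_anti k hw_nonneg
    hw_neg
end

section
/- Let R : ℝ → ℝ be differentiable and concave on [0,1] with R(0) = R(1) = 0, and let κ* ∈ [0,1] be a point where R attains its maximum over [0,1]. Let S : ℝ → ℝ be concave and nonincreasing on [0,1] with S(1) = 0. Then ∫_0^{κ*} R'(q)·S(q) dq ≤ 4 · R(1/2) · S(1/2). (That is, the absolute threshold mechanism with a single quantile threshold at 1/2 achieves a 4-approximation to the optimal expected per-user contribution when the status function is concave.) -/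
/-!
On `(0, κ*)` the derivative `R'` is nonnegative, since `R` is concave and peaks at `κ*`;
hence `∫₀^{κ*} R' S ≤ R(κ*) · c` for any upper bound `c ≥ 0` of `S` on `(0, κ*)`.
A nonnegative concave function on `[0, 1]` is at most twice its value at `1/2`: concavity at
the midpoint of `x` and `1 - x` gives `2 f(1/2) ≥ f x + f (1 - x) ≥ f x`. Applied to `R` and
to `S`, this bounds the integral by `2 R(1/2) · 2 S(1/2)`.
-/

open MeasureTheory intervalIntegral Set

theorem ConcaveOn.nonneg_of_mem_Icc {f : ℝ → ℝ} {a b x : ℝ} (hf : ConcaveOn ℝ (Icc a b) f)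
    (ha : 0 ≤ f a) (hb : 0 ≤ f b) (hx : x ∈ Icc a b) : 0 ≤ f x := by
  have hab : a ≤ b := hx.1.trans hx.2
  calc 0 ≤ min (f a) (f b) := le_min ha hb
    _ ≤ f x := hf.ge_on_segment (left_mem_Icc.2 hab) (right_mem_Icc.2 hab)
        (by rwa [segment_eq_Icc hab])

theorem ConcaveOn.le_two_mul_apply_midpoint {f : ℝ → ℝ} {a b x : ℝ}
    (hf : ConcaveOn ℝ (Icc a b) f) (ha : 0 ≤ f a) (hb : 0 ≤ f b) (hx : x ∈ Icc a b) :
    f x ≤ 2 * f ((a + b) / 2) := by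
  have hx' : a + b - x ∈ Icc a b := ⟨by linarith [hx.2], by linarith [hx.1]⟩
  have hmid := hf.2 hx hx' (by norm_num : (0 : ℝ) ≤ 1 / 2) (by norm_num : (0 : ℝ) ≤ 1 / 2)
    (by norm_num)
  have hmid_eq : (1 / 2 : ℝ) • x + (1 / 2 : ℝ) • (a + b - x) = (a + b) / 2 := by
    simp only [smul_eq_mul]; ring
  rw [hmid_eq, smul_eq_mul, smul_eq_mul] at hmid
  linarith [hf.nonneg_of_mem_Icc ha hb hx']

theorem intervalIntegral.integral_mul_le_of_deriv_nonneg {f f' g : ℝ → ℝ} {a b c : ℝ}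
    (hab : a ≤ b) (hc : 0 ≤ c) (hcont : ContinuousOn f (Icc a b))
    (hderiv : ∀ x ∈ Ioo a b, HasDerivAt f (f' x) x) (hf' : ∀ x ∈ Ioo a b, 0 ≤ f' x)
    (hg : ∀ x ∈ Ioo a b, g x ≤ c) :
    ∫ x in a..b, f' x * g x ≤ (f b - f a) * c := by
  have hf'_int : IntervalIntegrable f' volume a b :=
    intervalIntegrable_deriv_of_nonneg (by rwa [uIcc_of_le hab])
      (by rwa [min_eq_left hab, max_eq_right hab]) (by rwa [min_eq_left hab, max_eq_right hab])
  have hftc : ∫ x in a..b, f' x = f b - f a :=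
    integral_eq_sub_of_hasDerivAt_of_le hab hcont hderiv hf'_int
  by_cases hfg : IntervalIntegrable (fun x => f' x * g x) volume a b
  · calc ∫ x in a..b, f' x * g x ≤ ∫ x in a..b, f' x * c :=
          integral_mono_on_of_le_Ioo hab hfg (hf'_int.mul_const c)
            fun x hx => mul_le_mul_of_nonneg_left (hg x hx) (hf' x hx)
      _ = (f b - f a) * c := by rw [integral_mul_const, hftc]
  · have hmono : f a ≤ f b :=
      monotoneOn_of_hasDerivWithinAt_nonneg (convex_Icc a b) hcont
        (fun x hx => (hderiv x (by rwa [interior_Icc] at hx)).hasDerivWithinAt)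
        (fun x hx => hf' x (by rwa [interior_Icc] at hx))
        (left_mem_Icc.2 hab) (right_mem_Icc.2 hab) hab
    rw [integral_undef hfg]
    exact mul_nonneg (sub_nonneg.2 hmono) hc

theorem single_threshold_four_approx_concave
    (R : ℝ → ℝ)
    (hR_diff : DifferentiableOn ℝ R (Set.Icc 0 1))
    (hR_concave : ConcaveOn ℝ (Set.Icc 0 1) R)
    (hR0 : R 0 = 0) (hR1 : R 1 = 0)
    (κstar : ℝ) (hκ : κstar ∈ Set.Icc (0:ℝ) 1)
    (hκ_max : ∀ q ∈ Set.Icc (0:ℝ) 1, R q ≤ R κstar)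
    (S : ℝ → ℝ)
    (hS_concave : ConcaveOn ℝ (Set.Icc 0 1) S)
    (hS_anti : AntitoneOn S (Set.Icc 0 1))
    (hS1 : S 1 = 0) :
    (∫ q in (0:ℝ)..κstar, deriv R q * S q) ≤ 4 * R (1/2) * S (1/2) := by
  have hmid : ((0 : ℝ) + 1) / 2 = 1 / 2 := by norm_num
  have hS0 : 0 ≤ S 0 := hS1 ▸ hS_anti (left_mem_Icc.2 zero_le_one)
    (right_mem_Icc.2 zero_le_one) zero_le_one
  have hS_half : 0 ≤ S (1 / 2) :=
    hS_concave.nonneg_of_mem_Icc hS0 hS1.ge ⟨by norm_num, by norm_num⟩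
  have hRκ : R κstar ≤ 2 * R (1 / 2) :=
    hmid ▸ hR_concave.le_two_mul_apply_midpoint hR0.ge hR1.ge hκ
  have hS_le : ∀ q ∈ Ioo 0 κstar, S q ≤ 2 * S (1 / 2) := fun q hq =>
    hmid ▸ hS_concave.le_two_mul_apply_midpoint hS0 hS1.ge ⟨hq.1.le, hq.2.le.trans hκ.2⟩
  have hR_hasDeriv : ∀ q ∈ Ioo 0 κstar, HasDerivAt R (deriv R q) q := fun q hq =>
    ((hR_diff q ⟨hq.1.le, hq.2.le.trans hκ.2⟩).differentiableAt
      (Icc_mem_nhds hq.1 (hq.2.trans_le hκ.2))).hasDerivAt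
  have hR'_nonneg : ∀ q ∈ Ioo 0 κstar, 0 ≤ deriv R q := fun q hq => by
    have hq01 : q ∈ Icc (0 : ℝ) 1 := ⟨hq.1.le, hq.2.le.trans hκ.2⟩
    have hslope := hR_concave.slope_le_deriv hq01 hκ hq.2 (hR_hasDeriv q hq).differentiableAt
    rw [slope_def_field] at hslope
    exact (div_nonneg (sub_nonneg.2 (hκ_max q hq01)) (sub_nonneg.2 hq.2.le)).trans hslope
  calc (∫ q in (0:ℝ)..κstar, deriv R q * S q) ≤ (R κstar - R 0) * (2 * S (1 / 2)) :=
        integral_mul_le_of_deriv_nonneg hκ.1 (by positivity)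
          (hR_diff.continuousOn.mono (Icc_subset_Icc le_rfl hκ.2)) hR_hasDeriv hR'_nonneg hS_le
    _ ≤ 2 * R (1 / 2) * (2 * S (1 / 2)) := by rw [hR0, sub_zero]; gcongr
    _ = 4 * R (1/2) * S (1/2) := by ring
end

section
/- Let R : ℝ → ℝ be differentiable and concave on [0,1] with R(0) = R(1) = 0, and let κ* ∈ [0,1] be a point where R attains its maximum over [0,1]. Set σ = min{κ*, 1/2}. Then R(κ*)·(1−κ*) + ∫_0^{κ*} R(q) dq ≤ 2 · R(σ)·(1−σ). (That is, for the linear status function S(t) = 1−t, the absolute threshold mechanism with a single quantile threshold at min{κ*, 1/2} achieves a 2-approximation to the optimal expected per-user contribution.) -/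
/-!
If `κ* ≤ 1/2`, bound `R` on `[0, κ*]` by its maximum `R κ*`: the left side is at most
`R κ* ≤ 2 R κ* (1 - κ*)`. Otherwise bound `R` by its tangent line at `1/2`, whose slope `d` is
nonnegative because `R κ* ≥ R (1/2)`; integrating the tangent line bounds the left side by
`R (1/2) - d (1 - κ*)² / 2 ≤ R (1/2) = 2 R (1/2) (1 - 1/2)`.
-/

open MeasureTheory intervalIntegral

theorem ConcaveOn.le_add_derivWithin_mul_sub {f : ℝ → ℝ} {S : Set ℝ} {x y : ℝ}
    (hf : ConcaveOn ℝ S f) (hx : x ∈ S) (hy : y ∈ S) (hfx : DifferentiableWithinAt ℝ f S x) :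
    f y ≤ f x + derivWithin f S x * (y - x) := by
  rcases lt_trichotomy y x with hyx | rfl | hxy
  · have h := hf.derivWithin_le_slope hy hx hyx hfx
    rw [slope_def_field, le_div_iff₀ (sub_pos.2 hyx)] at h
    linarith
  · simp
  · have h := hf.slope_le_derivWithin hx hy hxy hfx
    rw [slope_def_field, div_le_iff₀ (sub_pos.2 hxy)] at h
    linarith

theorem intervalIntegral.integral_const_add_mul_sub (a d c b : ℝ) :
    ∫ q in (0:ℝ)..b, (a + d * (q - c)) = b * a + d * (b ^ 2 / 2 - c * b) := by
  rw [integral_add intervalIntegrable_const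
      ((intervalIntegrable_id.sub intervalIntegrable_const).const_mul d),
    integral_const_mul, integral_sub intervalIntegrable_id intervalIntegrable_const]
  simp only [integral_id, integral_const, smul_eq_mul]
  ring

section Contribution

variable {R : ℝ → ℝ} {κ : ℝ}

theorem add_integral_le_two_mul_of_le_half (hκ0 : 0 ≤ κ) (hκ : κ ≤ 1 / 2) (hRκ : 0 ≤ R κ)
    (hmax : ∀ q ∈ Set.Icc 0 κ, R q ≤ R κ) (hint : IntervalIntegrable R volume 0 κ) :
    R κ * (1 - κ) + ∫ q in (0:ℝ)..κ, R q ≤ 2 * R κ * (1 - κ) := by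
  have hint_le : ∫ q in (0:ℝ)..κ, R q ≤ κ * R κ := by
    simpa using integral_mono_on hκ0 hint intervalIntegrable_const hmax
  nlinarith

theorem add_integral_le_of_le_tangent_half {d : ℝ} (hκ0 : 0 ≤ κ) (hκ1 : κ ≤ 1) (hd : 0 ≤ d)
    (htan : ∀ q ∈ Set.Icc 0 κ, R q ≤ R (1 / 2) + d * (q - 1 / 2))
    (hint : IntervalIntegrable R volume 0 κ) :
    R κ * (1 - κ) + ∫ q in (0:ℝ)..κ, R q ≤ R (1 / 2) := by
  have hint_le : ∫ q in (0:ℝ)..κ, R q ≤ κ * R (1 / 2) + d * (κ ^ 2 / 2 - 1 / 2 * κ) := by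
    rw [← integral_const_add_mul_sub]
    exact integral_mono_on hκ0 hint
      (intervalIntegrable_const.add ((intervalIntegrable_id.sub intervalIntegrable_const).const_mul d))
      htan
  have hRκ := htan κ ⟨hκ0, le_rfl⟩
  nlinarith [mul_le_mul_of_nonneg_right hRκ (sub_nonneg.2 hκ1), mul_nonneg hd (sq_nonneg (1 - κ))]

end Contribution

theorem single_threshold_two_approx_linear_general
    (R : ℝ → ℝ)
    (hR_diff : DifferentiableOn ℝ R (Set.Icc 0 1))
    (hR_concave : ConcaveOn ℝ (Set.Icc 0 1) R)
    (hR0 : R 0 = 0)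
    (κstar : ℝ) (hκ : κstar ∈ Set.Icc (0:ℝ) 1)
    (hκ_max : ∀ q ∈ Set.Icc (0:ℝ) 1, R q ≤ R κstar)
    (σ : ℝ) (hσ : σ = min κstar (1/2)) :
    R κstar * (1 - κstar) + (∫ q in (0:ℝ)..κstar, R q) ≤ 2 * R σ * (1 - σ) := by
  obtain ⟨hκ0, hκ1⟩ := hκ
  have hsub : Set.Icc 0 κstar ⊆ Set.Icc 0 1 := Set.Icc_subset_Icc le_rfl hκ1
  have hint : IntervalIntegrable R volume 0 κstar :=
    (hR_diff.continuousOn.mono hsub).intervalIntegrable_of_Icc hκ0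
  rcases le_or_gt κstar (1 / 2) with hle | hgt
  · rw [hσ, min_eq_left hle]
    exact add_integral_le_two_mul_of_le_half hκ0 hle (hR0 ▸ hκ_max 0 ⟨le_rfl, zero_le_one⟩)
      (fun q hq ↦ hκ_max q (hsub hq)) hint
  · rw [hσ, min_eq_right hgt.le]
    have hhalf : (1 / 2 : ℝ) ∈ Set.Icc 0 1 := by norm_num
    set d := derivWithin R (Set.Icc 0 1) (1 / 2)
    have htan (q) (hq : q ∈ Set.Icc (0:ℝ) 1) : R q ≤ R (1 / 2) + d * (q - 1 / 2) :=
      hR_concave.le_add_derivWithin_mul_sub hhalf hq (hR_diff _ hhalf)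
    have hd : 0 ≤ d := by nlinarith [htan κstar ⟨hκ0, hκ1⟩, hκ_max _ hhalf]
    linarith [add_integral_le_of_le_tangent_half hκ0 hκ1 hd (fun q hq ↦ htan q (hsub hq)) hint]

theorem single_threshold_two_approx_linear
    (R : ℝ → ℝ)
    (hR_diff : DifferentiableOn ℝ R (Set.Icc 0 1))
    (hR_concave : ConcaveOn ℝ (Set.Icc 0 1) R)
    (hR0 : R 0 = 0) (hR1 : R 1 = 0)
    (κstar : ℝ) (hκ : κstar ∈ Set.Icc (0:ℝ) 1)
    (hκ_max : ∀ q ∈ Set.Icc (0:ℝ) 1, R q ≤ R κstar)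
    (σ : ℝ) (hσ : σ = min κstar (1/2)) :
    R κstar * (1 - κstar) + (∫ q in (0:ℝ)..κstar, R q) ≤ 2 * R σ * (1 - σ) :=
  single_threshold_two_approx_linear_general R hR_diff hR_concave hR0 κstar hκ hκ_max σ hσ
end

section
/- Let R : ℝ → ℝ be differentiable and concave on [0,1] with R(0) = R(1) = 0, and let κ* ∈ [0,1] be a point where R attains its maximum over [0,1]. Let S : ℝ → ℝ be differentiable, concave, and nonincreasing on [0,1] with S(1) = 0. Set σ = min{κ*, 1/2}. Then ∫_0^{κ*} R'(q)·S(q) dq ≤ 3 · R(σ)·S(σ). (That is, for concave status functions, the absolute threshold mechanism with a single quantile threshold at min{κ*, 1/2} achieves a 3-approximation to the optimal expected per-user contribution.) -/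
/-!
On `[0, κ*]` the integrand `R' · S` has `R' ≥ 0` and `S` nonincreasing, so on `[0, σ]` it is at
most `R(σ) S(0)` and on `[σ, κ*]` at most `(R(κ*) - R(σ)) S(σ)`. Concavity gives both halving
estimates `S(0) ≤ 2 S(σ)` (as `σ ≤ 1/2` and `S(1) = 0`) and `R(κ*) ≤ 2 R(σ)` (as `σ ≥ κ*/2` and
`R(0) = 0`), so the total is at most `2 R(σ) S(σ) + R(σ) S(σ)`.
-/

open MeasureTheory intervalIntegral Set

theorem ConcaveOn.le_two_mul_apply_of_half_le {E : Type*} [AddCommGroup E] [Module ℝ E]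
    {s : Set E} {f : E → ℝ} (hf : ConcaveOn ℝ s f) {x y : E} (hx : x ∈ s) (hy : y ∈ s)
    (hfx : 0 ≤ f x) (hfy : 0 ≤ f y) {t : ℝ} (ht : 1 / 2 ≤ t) (ht1 : t ≤ 1) :
    f y ≤ 2 * f ((1 - t) • x + t • y) := by
  have h := hf.2 hx hy (show 0 ≤ 1 - t by linarith) (show 0 ≤ t by linarith) (sub_add_cancel 1 t)
  rw [smul_eq_mul, smul_eq_mul] at h
  nlinarith

theorem ConcaveOn.le_two_mul_apply_min_half {f : ℝ → ℝ} (hf : ConcaveOn ℝ (Icc 0 1) f)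
    (hf0 : f 0 = 0) {κ : ℝ} (hκ : κ ∈ Icc (0 : ℝ) 1) (hfκ : 0 ≤ f κ) :
    f κ ≤ 2 * f (min κ (1 / 2)) := by
  rcases hκ.1.eq_or_lt with rfl | hκ0
  · simp [hf0]
  have hmin : (1 - min κ (1 / 2) / κ) • (0 : ℝ) + (min κ (1 / 2) / κ) • κ = min κ (1 / 2) := by
    simp [hκ0.ne']
  rw [← hmin]
  refine hf.le_two_mul_apply_of_half_le ⟨le_rfl, zero_le_one⟩ hκ hf0.ge hfκ ?_ ?_
  · rw [le_div_iff₀ hκ0]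
    exact le_min (by linarith [hκ.2]) (by linarith [hκ.2])
  · exact div_le_one_of_le₀ (min_le_left _ _) hκ0.le

theorem ConcaveOn.apply_zero_le_two_mul {f : ℝ → ℝ} (hf : ConcaveOn ℝ (Icc 0 1) f)
    (hf1 : f 1 = 0) (hf0 : 0 ≤ f 0) {σ : ℝ} (hσ : σ ∈ Icc (0 : ℝ) (1 / 2)) :
    f 0 ≤ 2 * f σ := by
  have h := hf.le_two_mul_apply_of_half_le ⟨zero_le_one, le_rfl⟩ ⟨le_rfl, zero_le_one⟩
    hf1.ge hf0 (t := 1 - σ) (by linarith [hσ.2]) (by linarith [hσ.1])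
  simpa using h

theorem ConcaveOn.deriv_nonneg_of_le {s : Set ℝ} {f : ℝ → ℝ} (hf : ConcaveOn ℝ s f) {x y : ℝ}
    (hx : x ∈ s) (hy : y ∈ s) (hxy : x < y) (hfd : DifferentiableAt ℝ f x)
    (hle : f x ≤ f y) : 0 ≤ deriv f x := by
  have h := hf.slope_le_deriv hx hy hxy hfd
  rw [slope_def_field] at h
  exact (div_nonneg (sub_nonneg.2 hle) (sub_nonneg.2 hxy.le)).trans h

section DerivMulAntitone

variable {F f g : ℝ → ℝ} {a b c : ℝ}

theorem intervalIntegrable_mul_of_hasDerivAt_of_nonneg_of_antitoneOn (hab : a ≤ b)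
    (hF : ContinuousOn F (Icc a b)) (hF' : ∀ x ∈ Ioo a b, HasDerivAt F (f x) x)
    (hf : ∀ x ∈ Ioo a b, 0 ≤ f x) (hg : AntitoneOn g (Icc a b)) :
    IntervalIntegrable (fun x => f x * g x) volume a b := by
  rw [intervalIntegrable_iff_integrableOn_Ioc_of_le hab]
  have hg_int : IntervalIntegrable g volume a b :=
    AntitoneOn.intervalIntegrable (by rwa [uIcc_of_le hab])
  refine (integrableOn_deriv_of_nonneg hF hF' hf).mul_bdd hg_int.1.aestronglyMeasurable
    (c := max |g b| |g a|) (ae_restrict_of_forall_mem measurableSet_Ioc fun x hx => ?_)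
  have hx' : x ∈ Icc a b := Ioc_subset_Icc_self hx
  exact abs_le_max_abs_abs (hg hx' ⟨hab, le_rfl⟩ hx'.2) (hg ⟨le_rfl, hab⟩ hx' hx'.1)

theorem integral_mul_le_of_hasDerivAt_of_nonneg_of_antitoneOn (hab : a ≤ b)
    (hF : ContinuousOn F (Icc a b)) (hF' : ∀ x ∈ Ioo a b, HasDerivAt F (f x) x)
    (hf : ∀ x ∈ Ioo a b, 0 ≤ f x) (hg : AntitoneOn g (Icc a b)) :
    ∫ x in a..b, f x * g x ≤ (F b - F a) * g a := by
  have hf_int : IntervalIntegrable f volume a b :=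
    (intervalIntegrable_iff_integrableOn_Ioc_of_le hab).2 (integrableOn_deriv_of_nonneg hF hF' hf)
  calc ∫ x in a..b, f x * g x
      ≤ ∫ x in a..b, f x * g a := by
        refine integral_mono_on_of_le_Ioo hab
          (intervalIntegrable_mul_of_hasDerivAt_of_nonneg_of_antitoneOn hab hF hF' hf hg)
          (hf_int.mul_const _) fun x hx => ?_
        exact mul_le_mul_of_nonneg_left
          (hg ⟨le_rfl, hab⟩ (Ioo_subset_Icc_self hx) hx.1.le) (hf x hx)
    _ = (F b - F a) * g a := by
        rw [intervalIntegral.integral_mul_const,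
          integral_eq_sub_of_hasDerivAt_of_le hab hF hF' hf_int]

theorem integral_mul_le_add_of_hasDerivAt_of_nonneg_of_antitoneOn (hab : a ≤ b)
    (hbc : b ≤ c) (hF : ContinuousOn F (Icc a c)) (hF' : ∀ x ∈ Ioo a c, HasDerivAt F (f x) x)
    (hf : ∀ x ∈ Ioo a c, 0 ≤ f x) (hg : AntitoneOn g (Icc a c)) :
    ∫ x in a..c, f x * g x ≤ (F b - F a) * g a + (F c - F b) * g b := by
  have restrict : ∀ {u v : ℝ}, a ≤ u → v ≤ c → ContinuousOn F (Icc u v) ∧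
      (∀ x ∈ Ioo u v, HasDerivAt F (f x) x) ∧ (∀ x ∈ Ioo u v, 0 ≤ f x) ∧ AntitoneOn g (Icc u v) :=
    fun hu hv => ⟨hF.mono (Icc_subset_Icc hu hv), fun x hx => hF' x (Ioo_subset_Ioo hu hv hx),
      fun x hx => hf x (Ioo_subset_Ioo hu hv hx), hg.mono (Icc_subset_Icc hu hv)⟩
  obtain ⟨hF₁, hF'₁, hf₁, hg₁⟩ := restrict le_rfl hbc
  obtain ⟨hF₂, hF'₂, hf₂, hg₂⟩ := restrict hab le_rfl
  rw [← integral_add_adjacent_intervals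
    (intervalIntegrable_mul_of_hasDerivAt_of_nonneg_of_antitoneOn hab hF₁ hF'₁ hf₁ hg₁)
    (intervalIntegrable_mul_of_hasDerivAt_of_nonneg_of_antitoneOn hbc hF₂ hF'₂ hf₂ hg₂)]
  exact add_le_add (integral_mul_le_of_hasDerivAt_of_nonneg_of_antitoneOn hab hF₁ hF'₁ hf₁ hg₁)
    (integral_mul_le_of_hasDerivAt_of_nonneg_of_antitoneOn hbc hF₂ hF'₂ hf₂ hg₂)

end DerivMulAntitone

theorem single_threshold_three_approx_concave_general
    (R : ℝ → ℝ)
    (hR_diff : DifferentiableOn ℝ R (Set.Icc 0 1))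
    (hR_concave : ConcaveOn ℝ (Set.Icc 0 1) R)
    (hR0 : R 0 = 0)
    (κstar : ℝ) (hκ : κstar ∈ Set.Icc (0:ℝ) 1)
    (hκ_max : ∀ q ∈ Set.Icc (0:ℝ) 1, R q ≤ R κstar)
    (S : ℝ → ℝ)
    (hS_concave : ConcaveOn ℝ (Set.Icc 0 1) S)
    (hS_anti : AntitoneOn S (Set.Icc 0 1))
    (hS1 : S 1 = 0)
    (σ : ℝ) (hσ : σ = min κstar (1/2)) :
    (∫ q in (0:ℝ)..κstar, deriv R q * S q) ≤ 3 * R σ * S σ := by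
  have hσκ : σ ≤ κstar := hσ ▸ min_le_left _ _
  have hσ_half : σ ∈ Icc (0 : ℝ) (1 / 2) := hσ ▸ ⟨le_min hκ.1 (by norm_num), min_le_right _ _⟩
  have hσ_mem : σ ∈ Icc (0 : ℝ) 1 := ⟨hσ_half.1, hσ_half.2.trans (by norm_num)⟩
  have hS_nonneg : ∀ q ∈ Icc (0 : ℝ) 1, 0 ≤ S q := fun q hq =>
    hS1 ▸ hS_anti hq ⟨zero_le_one, le_rfl⟩ hq.2
  have hRκ : 0 ≤ R κstar := hR0 ▸ hκ_max 0 ⟨le_rfl, zero_le_one⟩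
  have hRκσ : R κstar ≤ 2 * R σ := hσ ▸ hR_concave.le_two_mul_apply_min_half hR0 hκ hRκ
  have hS0σ : S 0 ≤ 2 * S σ :=
    hS_concave.apply_zero_le_two_mul hS1 (hS_nonneg 0 ⟨le_rfl, zero_le_one⟩) hσ_half
  have hIoo : Ioo 0 κstar ⊆ Icc (0 : ℝ) 1 := Ioo_subset_Icc_self.trans (Icc_subset_Icc le_rfl hκ.2)
  have hR_deriv : ∀ x ∈ Ioo 0 κstar, HasDerivAt R (deriv R x) x := fun x hx =>
    ((hR_diff x (hIoo hx)).differentiableAt (Icc_mem_nhds hx.1 (hx.2.trans_le hκ.2))).hasDerivAt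
  have hR_deriv_nonneg : ∀ x ∈ Ioo 0 κstar, 0 ≤ deriv R x := fun x hx =>
    hR_concave.deriv_nonneg_of_le (hIoo hx) hκ hx.2 (hR_deriv x hx).differentiableAt
      (hκ_max x (hIoo hx))
  have hR_cont : ContinuousOn R (Icc 0 κstar) :=
    hR_diff.continuousOn.mono (Icc_subset_Icc le_rfl hκ.2)
  calc _ ≤ (R σ - R 0) * S 0 + (R κstar - R σ) * S σ :=
        integral_mul_le_add_of_hasDerivAt_of_nonneg_of_antitoneOn hσ_mem.1 hσκ hR_cont hR_deriv
          hR_deriv_nonneg (hS_anti.mono (Icc_subset_Icc le_rfl hκ.2))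
    _ ≤ 3 * R σ * S σ := by
      rw [hR0, sub_zero]
      linarith [mul_le_mul_of_nonneg_left hS0σ (show 0 ≤ R σ by linarith),
        mul_le_mul_of_nonneg_right hRκσ (hS_nonneg σ hσ_mem)]

theorem single_threshold_three_approx_concave
    (R : ℝ → ℝ)
    (hR_diff : DifferentiableOn ℝ R (Set.Icc 0 1))
    (hR_concave : ConcaveOn ℝ (Set.Icc 0 1) R)
    (hR0 : R 0 = 0) (hR1 : R 1 = 0)
    (κstar : ℝ) (hκ : κstar ∈ Set.Icc (0:ℝ) 1)
    (hκ_max : ∀ q ∈ Set.Icc (0:ℝ) 1, R q ≤ R κstar)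
    (S : ℝ → ℝ)
    (hS_diff : DifferentiableOn ℝ S (Set.Icc 0 1))
    (hS_concave : ConcaveOn ℝ (Set.Icc 0 1) S)
    (hS_anti : AntitoneOn S (Set.Icc 0 1))
    (hS1 : S 1 = 0)
    (σ : ℝ) (hσ : σ = min κstar (1/2)) :
    (∫ q in (0:ℝ)..κstar, deriv R q * S q) ≤ 3 * R σ * S σ :=
  single_threshold_three_approx_concave_general R hR_diff hR_concave hR0 κstar hκ hκ_max S
    hS_concave hS_anti hS1 σ hσ
end

section
/- For H > 0 define R_H(q) = q·(1−q)/(1/H + q) for q ∈ [0,1] and κ*_H = (√(1+H) − 1)/H. Then: (a) κ*_H is the unique maximizer of R_H on [0,1]; (b) κ*_H → 0 as H → ∞; (c) R_H(κ*_H)·(1−κ*_H) + ∫_0^{κ*_H} R_H(q) dq → 1 as H → ∞; and (d) (1/2)·R_H(1/2) → 1/4 as H → ∞. Consequently the ratio of the quantities in (c) and (d) tends to 4, so the 4-approximation factor of the median threshold mechanism for linear status is tight. -/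
open MeasureTheory intervalIntegral Filter

/-- The revenue function of the ability distribution with CDF
`F_H(v) = ((H+1)/H) · v/(v+1)` on `[0,H]`. -/
noncomputable def RH (H : ℝ) (q : ℝ) : ℝ := q * (1 - q) / (1 / H + q)

/-- The monopoly quantile of the above distribution. -/
noncomputable def κH (H : ℝ) : ℝ := (Real.sqrt (1 + H) - 1) / H

/-!
With `s = √(1 + H)` we have `H = (s - 1)(s + 1)`, so `κ = κ*_H = 1/(s + 1)` and `κ` is the positive
root of `κ² + 2κ/H = 1/H`. This quadratic relation gives `R_H(κ) = 1 - 2κ` and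
`(R_H(κ) - R_H(q)) · (1/H + q) = (q - κ)²`, hence (a). As `H → ∞`, `κ → 0` and
`R_H(q) → 1 - q` pointwise; since `0 ≤ R_H ≤ 1` on `[0, 1]`, the integral over `[0, κ]` is at most
`κ`, so the optimal contribution tends to `1 · 1 + 0` while the median one tends to `(1/2)(1 - 1/2)`.
-/

section
variable {H q : ℝ}

lemma κH_eq_one_div (hH : 0 < H) : κH H = 1 / (Real.sqrt (1 + H) + 1) := by
  have hs : Real.sqrt (1 + H) ^ 2 = 1 + H := Real.sq_sqrt (by linarith)
  rw [κH, div_eq_div_iff hH.ne' (by positivity)]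
  linear_combination hs

lemma one_lt_sqrt_one_add (hH : 0 < H) : 1 < Real.sqrt (1 + H) :=
  Real.lt_sqrt_of_sq_lt (by linarith)

lemma κH_pos (hH : 0 < H) : 0 < κH H := by
  rw [κH_eq_one_div hH]
  have := one_lt_sqrt_one_add hH
  positivity

lemma κH_le_one (hH : 0 < H) : κH H ≤ 1 := by
  rw [κH_eq_one_div hH, div_le_one (by linarith [one_lt_sqrt_one_add hH])]
  linarith [one_lt_sqrt_one_add hH]

lemma κH_sq_add (hH : 0 < H) : κH H ^ 2 + 2 * κH H / H = 1 / H := by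
  have hs : Real.sqrt (1 + H) ^ 2 = 1 + H := Real.sq_sqrt (by linarith)
  rw [κH]
  field_simp
  linear_combination hs

lemma RH_κH (hH : 0 < H) : RH H (κH H) = 1 - 2 * κH H := by
  have hden : 1 / H + κH H ≠ 0 := by have := κH_pos hH; positivity
  rw [RH, div_eq_iff hden]
  linear_combination κH_sq_add hH

lemma RH_κH_sub_mul (hH : 0 < H) (hq : 0 ≤ q) :
    (RH H (κH H) - RH H q) * (1 / H + q) = (q - κH H) ^ 2 := by
  have hden : 1 / H + q ≠ 0 := by positivity
  rw [RH_κH hH, sub_mul, RH, div_mul_cancel₀ _ hden]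
  linear_combination -κH_sq_add hH

lemma RH_lt_RH_κH (hH : 0 < H) (hq : 0 ≤ q) (hne : q ≠ κH H) : RH H q < RH H (κH H) := by
  have hsq : 0 < (q - κH H) ^ 2 := by have := sub_ne_zero.mpr hne; positivity
  have hden : 0 < 1 / H + q := by positivity
  nlinarith [RH_κH_sub_mul hH hq]

lemma abs_RH_le_one (hH : 0 < H) (hq : q ∈ Set.Icc (0 : ℝ) 1) : |RH H q| ≤ 1 := by
  have hden : 0 < 1 / H + q := by have := hq.1; positivity
  rw [RH, abs_of_nonneg (div_nonneg (mul_nonneg hq.1 (by linarith [hq.2])) hden.le),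
    div_le_one hden]
  nlinarith [hq.1, hq.2, one_div_pos.mpr hH]

end

lemma tendsto_κH_atTop : Tendsto κH atTop (nhds 0) := by
  have hs : Tendsto (fun H : ℝ => Real.sqrt (1 + H) + 1) atTop atTop :=
    tendsto_atTop_add_const_right _ 1
      (Real.tendsto_sqrt_atTop.comp (tendsto_atTop_add_const_left _ 1 tendsto_id))
  refine ((tendsto_const_nhds (x := (1 : ℝ))).div_atTop hs).congr' ?_
  filter_upwards [eventually_gt_atTop 0] with H hH using (κH_eq_one_div hH).symm

lemma tendsto_RH_atTop {q : ℝ} (hq : q ≠ 0) : Tendsto (fun H => RH H q) atTop (nhds (1 - q)) := by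
  have hinv : Tendsto (fun H : ℝ => 1 / H + q) atTop (nhds (0 + q)) :=
    (tendsto_const_nhds.div_atTop tendsto_id).add_const q
  have hlim := (tendsto_const_nhds (x := q * (1 - q))).div hinv (by simpa using hq)
  rwa [zero_add, mul_div_cancel_left₀ _ hq] at hlim

lemma tendsto_integral_RH_κH :
    Tendsto (fun H => ∫ q in (0 : ℝ)..(κH H), RH H q) atTop (nhds 0) := by
  refine squeeze_zero_norm' ?_ tendsto_κH_atTop
  filter_upwards [eventually_gt_atTop 0] with H hH
  have hbound : ∀ q ∈ Set.uIoc (0 : ℝ) (κH H), ‖RH H q‖ ≤ 1 := by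
    intro q hq
    rw [Set.uIoc_of_le (κH_pos hH).le] at hq
    exact abs_RH_le_one hH ⟨hq.1.le, hq.2.trans (κH_le_one hH)⟩
  simpa [abs_of_pos (κH_pos hH)] using norm_integral_le_of_norm_le_const hbound

lemma tendsto_RH_κH_mul_add_integral :
    Tendsto (fun H => RH H (κH H) * (1 - κH H) + ∫ q in (0 : ℝ)..(κH H), RH H q)
      atTop (nhds 1) := by
  have hκ := tendsto_κH_atTop
  have hlim : Tendsto (fun H => (1 - 2 * κH H) * (1 - κH H) + ∫ q in (0 : ℝ)..(κH H), RH H q)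
      atTop (nhds ((1 - 2 * 0) * (1 - 0) + 0)) :=
    ((tendsto_const_nhds.sub (hκ.const_mul 2)).mul (tendsto_const_nhds.sub hκ)).add
      tendsto_integral_RH_κH
  rw [show ((1 : ℝ) - 2 * 0) * (1 - 0) + 0 = 1 by norm_num] at hlim
  refine hlim.congr' ?_
  filter_upwards [eventually_gt_atTop 0] with H hH
  rw [RH_κH hH]

theorem median_mechanism_four_approx_tight :
    (∀ H : ℝ, 0 < H →
      κH H ∈ Set.Icc (0:ℝ) 1 ∧
      (∀ q ∈ Set.Icc (0:ℝ) 1, q ≠ κH H → RH H q < RH H (κH H))) ∧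
    Tendsto κH atTop (nhds 0) ∧
    Tendsto (fun H : ℝ => RH H (κH H) * (1 - κH H) + ∫ q in (0:ℝ)..(κH H), RH H q)
      atTop (nhds 1) ∧
    Tendsto (fun H : ℝ => (1/2) * RH H (1/2)) atTop (nhds (1/4)) := by
  refine ⟨fun H hH => ⟨⟨(κH_pos hH).le, κH_le_one hH⟩, fun q hq hne => RH_lt_RH_κH hH hq.1 hne⟩,
    tendsto_κH_atTop, tendsto_RH_κH_mul_add_integral, ?_⟩
  convert (tendsto_RH_atTop (q := 1 / 2) (by norm_num)).const_mul (1 / 2) using 2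
  norm_num
end

section
/- Let v : [0,1] → ℝ be continuous and strictly decreasing with v(1) = 0 and v(0) > 0, and let S : [0,1] → ℝ be continuous and strictly decreasing with S(1) = 0. Let 0 = θ_0 < θ_1 < θ_2 < … < θ_m be contribution thresholds, and adopt the convention κ_0 = 1. Then there exist a unique integer p with 0 ≤ p ≤ m and unique quantiles 1 > κ_1 > κ_2 > … > κ_p > 0 such that v(κ_t)·(S(κ_t) − S(κ_{t−1})) = θ_t − θ_{t−1} for every t = 1, …, p, and, if p < m, additionally v(0)·(S(0) − S(κ_p)) ≤ θ_{p+1} − θ_p. -/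
/-!
Write `statusGain v S c q = v q * (S q - S c)` for the gain of a user at quantile `q` from
moving up from the badge with quantile threshold `c` to the one with threshold `q`. For
`c ≤ 1` it is continuous and strictly decreasing in `q ∈ [0, c]`, with value `0` at `q = c`:
`v ≥ 0` and `S q - S c ≥ 0` there, and both factors strictly decrease. Hence each indifference
equation has at most one solution below the previous threshold, and one exactly when the
cost increment is below the gain `statusGain v S c 0` of the highest-ability user. This
pins down the thresholds one after another, and `p` is the first step at which the gain of
the top user no longer covers the cost increment.
-/

/-- The conditions characterizing the symmetric equilibrium of an absolute threshold
mechanism: quantile thresholds `1 = κ 0 > κ 1 > … > κ p > 0` such that the user at each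
boundary quantile is indifferent between adjacent badges, and, if `p < m`, the
highest-ability user does not prefer to reach threshold `p+1`. -/
def EqmQuantileThresholds (v S : ℝ → ℝ) (m : ℕ) (θ : ℕ → ℝ) (p : ℕ) (κ : ℕ → ℝ) : Prop :=
  p ≤ m ∧
  κ 0 = 1 ∧
  (∀ t, 1 ≤ t → t ≤ p → 0 < κ t) ∧
  (∀ t, 1 ≤ t → t ≤ p → κ t < κ (t - 1)) ∧
  (∀ t, 1 ≤ t → t ≤ p → v (κ t) * (S (κ t) - S (κ (t - 1))) = θ t - θ (t - 1)) ∧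
  (p < m → v 0 * (S 0 - S (κ p)) ≤ θ (p + 1) - θ p)

open Set

def statusGain (v S : ℝ → ℝ) (c q : ℝ) : ℝ := v q * (S q - S c)

section StatusGain

variable {v S : ℝ → ℝ} {c : ℝ}

@[simp]
lemma statusGain_self : statusGain v S c c = 0 := by
  simp [statusGain]

lemma continuousOn_statusGain (hv : ContinuousOn v (Icc 0 1)) (hS : ContinuousOn S (Icc 0 1))
    (hc : c ≤ 1) : ContinuousOn (statusGain v S c) (Icc 0 c) := by
  have hsub : Icc 0 c ⊆ Icc 0 1 := Icc_subset_Icc_right hc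
  exact (hv.mono hsub).mul ((hS.mono hsub).sub continuousOn_const)

lemma strictAntiOn_statusGain (hv : StrictAntiOn v (Icc 0 1)) (hv1 : v 1 = 0)
    (hS : StrictAntiOn S (Icc 0 1)) (hc : c ≤ 1) :
    StrictAntiOn (statusGain v S c) (Icc 0 c) := by
  have hsub : Icc 0 c ⊆ Icc 0 1 := Icc_subset_Icc_right hc
  intro x hx y hy hxy
  have hc₁ : c ∈ Icc (0 : ℝ) 1 := ⟨hx.1.trans hx.2, hc⟩
  have hvy : 0 ≤ v y :=
    hv1 ▸ hv.antitoneOn (hsub hy) ⟨zero_le_one, le_rfl⟩ (hy.2.trans hc)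
  have hSy : 0 ≤ S y - S c := sub_nonneg.2 (hS.antitoneOn (hsub hy) hc₁ hy.2)
  exact mul_lt_mul'' (hv (hsub hx) (hsub hy) hxy)
    (sub_lt_sub_right (hS (hsub hx) (hsub hy) hxy) _) hvy hSy

lemma exists_statusGain_eq (hv : ContinuousOn v (Icc 0 1)) (hS : ContinuousOn S (Icc 0 1))
    (hc : c ∈ Icc 0 1) {Δ : ℝ} (hΔ : 0 < Δ) (hΔc : Δ < statusGain v S c 0) :
    ∃ q ∈ Ioo 0 c, statusGain v S c q = Δ :=
  intermediate_value_Ioo' hc.1 (continuousOn_statusGain hv hS hc.2)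
    ⟨statusGain_self (v := v) ▸ hΔ, hΔc⟩

end StatusGain

lemma eqmQuantileThresholds_iff {v S : ℝ → ℝ} {m : ℕ} {θ : ℕ → ℝ} {p : ℕ} {κ : ℕ → ℝ} :
    EqmQuantileThresholds v S m θ p κ ↔
      p ≤ m ∧ κ 0 = 1 ∧
      (∀ t < p, 0 < κ (t + 1) ∧ κ (t + 1) < κ t ∧
        statusGain v S (κ t) (κ (t + 1)) = θ (t + 1) - θ t) ∧
      (p < m → statusGain v S (κ p) 0 ≤ θ (p + 1) - θ p) := by
  constructor
  · rintro ⟨hpm, hκ0, hpos, hlt, hind, hlast⟩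
    refine ⟨hpm, hκ0, fun t ht => ?_, hlast⟩
    have h₁ : 1 ≤ t + 1 := Nat.le_add_left 1 t
    simpa using And.intro (hpos (t + 1) h₁ ht) ⟨hlt (t + 1) h₁ ht, hind (t + 1) h₁ ht⟩
  · rintro ⟨hpm, hκ0, hstep, hlast⟩
    have hstep' : ∀ t, 1 ≤ t → t ≤ p → 0 < κ t ∧ κ t < κ (t - 1) ∧
        statusGain v S (κ (t - 1)) (κ t) = θ t - θ (t - 1) := fun t ht₁ htp => by
      obtain ⟨s, rfl⟩ := Nat.exists_eq_add_of_le' ht₁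
      simpa using hstep s htp
    exact ⟨hpm, hκ0, fun t ht₁ htp => (hstep' t ht₁ htp).1,
      fun t ht₁ htp => (hstep' t ht₁ htp).2.1, fun t ht₁ htp => (hstep' t ht₁ htp).2.2, hlast⟩

namespace EqmQuantileThresholds

variable {v S : ℝ → ℝ} {m : ℕ} {θ : ℕ → ℝ} {p : ℕ} {κ : ℕ → ℝ}

lemma le (h : EqmQuantileThresholds v S m θ p κ) : p ≤ m := h.1

lemma zero (h : EqmQuantileThresholds v S m θ p κ) : κ 0 = 1 := h.2.1

lemma step (h : EqmQuantileThresholds v S m θ p κ) {t : ℕ} (ht : t < p) :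
    0 < κ (t + 1) ∧ κ (t + 1) < κ t ∧ statusGain v S (κ t) (κ (t + 1)) = θ (t + 1) - θ t :=
  (eqmQuantileThresholds_iff.1 h).2.2.1 t ht

lemma last (h : EqmQuantileThresholds v S m θ p κ) (hp : p < m) :
    statusGain v S (κ p) 0 ≤ θ (p + 1) - θ p :=
  h.2.2.2.2.2 hp

lemma mem_Icc (h : EqmQuantileThresholds v S m θ p κ) {t : ℕ} (ht : t ≤ p) :
    κ t ∈ Icc 0 1 := by
  induction t with
  | zero => simp [h.zero]
  | succ t ih =>
    obtain ⟨hpos, hlt, -⟩ := h.step ht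
    exact ⟨hpos.le, hlt.le.trans (ih (by omega)).2⟩

lemma succ_mem_Icc (h : EqmQuantileThresholds v S m θ p κ) {t : ℕ} (ht : t < p) :
    κ (t + 1) ∈ Icc 0 (κ t) :=
  ⟨(h.step ht).1.le, (h.step ht).2.1.le⟩

lemma of_le_of_last (h : EqmQuantileThresholds v S m θ p κ) {m' : ℕ} (hpm : p ≤ m')
    (hlast : p < m' → statusGain v S (κ p) 0 ≤ θ (p + 1) - θ p) :
    EqmQuantileThresholds v S m' θ p κ :=
  ⟨hpm, h.2.1, h.2.2.1, h.2.2.2.1, h.2.2.2.2.1, hlast⟩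

lemma extend (h : EqmQuantileThresholds v S m θ p κ) {q : ℝ} (hq : q ∈ Ioo 0 (κ p))
    (hgain : statusGain v S (κ p) q = θ (p + 1) - θ p) :
    EqmQuantileThresholds v S (p + 1) θ (p + 1) (fun t => if t ≤ p then κ t else q) := by
  refine eqmQuantileThresholds_iff.2 ⟨le_rfl, by simp [h.zero], fun t ht => ?_, by simp⟩
  rcases Nat.lt_succ_iff_lt_or_eq.1 ht with ht | rfl
  · simpa [ht.le, Nat.succ_le_of_lt ht] using h.step ht
  · simpa using ⟨hq.1, hq.2, hgain⟩

variable (hv : StrictAntiOn v (Icc 0 1)) (hv1 : v 1 = 0) (hS : StrictAntiOn S (Icc 0 1))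
include hv hv1 hS

lemma eq_of_le {p' : ℕ} {κ' : ℕ → ℝ} (h : EqmQuantileThresholds v S m θ p κ)
    (h' : EqmQuantileThresholds v S m θ p' κ') {t : ℕ} (ht : t ≤ p) (ht' : t ≤ p') :
    κ t = κ' t := by
  induction t with
  | zero => rw [h.zero, h'.zero]
  | succ t ih =>
    have hκt := ih (by omega) (by omega)
    have hmem' := h'.succ_mem_Icc ht'
    rw [← hκt] at hmem'
    refine (strictAntiOn_statusGain hv hv1 hS (h.mem_Icc (Nat.le_of_succ_le ht)).2).injOn
      (h.succ_mem_Icc ht) hmem' ?_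
    rw [(h.step ht).2.2, hκt, (h'.step ht').2.2]

lemma le_of_eqm {p' : ℕ} {κ' : ℕ → ℝ} (h : EqmQuantileThresholds v S m θ p κ)
    (h' : EqmQuantileThresholds v S m θ p' κ') : p' ≤ p := by
  by_contra! hlt
  have hκp := h.eq_of_le hv hv1 hS h' le_rfl hlt.le
  obtain ⟨hpos, -, hgain⟩ := h'.step hlt
  -- the top user would gain strictly more than the marginal user `κ' (p + 1)` does
  have hgt := strictAntiOn_statusGain hv hv1 hS (h'.mem_Icc hlt.le).2
    ⟨le_rfl, (h'.mem_Icc hlt.le).1⟩ (h'.succ_mem_Icc hlt) hpos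
  have := h.last (hlt.trans_le h'.le)
  rw [hκp] at this
  linarith

end EqmQuantileThresholds

theorem exists_eqmQuantileThresholds {v S : ℝ → ℝ} (hv : ContinuousOn v (Icc 0 1))
    (hS : ContinuousOn S (Icc 0 1)) {θ : ℕ → ℝ} :
    ∀ m : ℕ, (∀ t < m, θ t < θ (t + 1)) → ∃ p κ, EqmQuantileThresholds v S m θ p κ
  | 0, _ => ⟨0, fun _ => 1, eqmQuantileThresholds_iff.2 ⟨le_rfl, rfl, by simp, by simp⟩⟩
  | m + 1, hθ => by
    obtain ⟨p, κ, h⟩ := exists_eqmQuantileThresholds hv hS m fun t ht => hθ t (by omega)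
    by_cases hlast : p < m + 1 → statusGain v S (κ p) 0 ≤ θ (p + 1) - θ p
    · exact ⟨p, κ, h.of_le_of_last (by have := h.le; omega) hlast⟩
    simp only [Classical.not_imp, not_le] at hlast
    obtain rfl : p = m := by
      by_contra hpm
      exact (h.last (by have := h.le; omega)).not_gt hlast.2
    obtain ⟨q, hq, hgain⟩ := exists_statusGain_eq hv hS (h.mem_Icc le_rfl)
      (sub_pos.2 (hθ p p.lt_succ_self)) hlast.2
    exact ⟨p + 1, _, h.extend hq hgain⟩

theorem unique_equilibrium_absolute_threshold_general
    (v : ℝ → ℝ)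
    (hv_cont : ContinuousOn v (Set.Icc 0 1))
    (hv_anti : StrictAntiOn v (Set.Icc 0 1))
    (hv1 : v 1 = 0)
    (S : ℝ → ℝ)
    (hS_cont : ContinuousOn S (Set.Icc 0 1))
    (hS_anti : StrictAntiOn S (Set.Icc 0 1))
    (m : ℕ) (θ : ℕ → ℝ)
    (hθ_mono : ∀ t, t < m → θ t < θ (t + 1)) :
    ∃ p : ℕ, ∃ κ : ℕ → ℝ,
      EqmQuantileThresholds v S m θ p κ ∧
      ∀ p' : ℕ, ∀ κ' : ℕ → ℝ, EqmQuantileThresholds v S m θ p' κ' →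
        p' = p ∧ ∀ t, 1 ≤ t → t ≤ p → κ' t = κ t := by
  obtain ⟨p, κ, h⟩ := exists_eqmQuantileThresholds hv_cont hS_cont m hθ_mono
  refine ⟨p, κ, h, fun p' κ' h' => ?_⟩
  obtain rfl : p' = p :=
    le_antisymm (h.le_of_eqm hv_anti hv1 hS_anti h') (h'.le_of_eqm hv_anti hv1 hS_anti h)
  exact ⟨rfl, fun t _ ht => h'.eq_of_le hv_anti hv1 hS_anti h ht ht⟩

theorem unique_equilibrium_absolute_threshold
    (v : ℝ → ℝ)
    (hv_cont : ContinuousOn v (Set.Icc 0 1))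
    (hv_anti : StrictAntiOn v (Set.Icc 0 1))
    (hv1 : v 1 = 0) (hv0 : 0 < v 0)
    (S : ℝ → ℝ)
    (hS_cont : ContinuousOn S (Set.Icc 0 1))
    (hS_anti : StrictAntiOn S (Set.Icc 0 1))
    (hS1 : S 1 = 0)
    (m : ℕ) (θ : ℕ → ℝ)
    (hθ0 : θ 0 = 0)
    (hθ_mono : ∀ t, t < m → θ t < θ (t + 1)) :
    ∃ p : ℕ, ∃ κ : ℕ → ℝ,
      EqmQuantileThresholds v S m θ p κ ∧
      ∀ p' : ℕ, ∀ κ' : ℕ → ℝ, EqmQuantileThresholds v S m θ p' κ' →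
        p' = p ∧ ∀ t, 1 ≤ t → t ≤ p → κ' t = κ t :=
  unique_equilibrium_absolute_threshold_general v hv_cont hv_anti hv1 S hS_cont hS_anti m θ hθ_mono
end

section
/- Let m ≥ 3 be an integer. Let R : ℝ → ℝ be differentiable and concave on [0,1] with R(0) = R(1) = 0, and let κ* ∈ [0,1] be a point where R attains its maximum over [0,1]. Let S : ℝ → ℝ be differentiable, concave, strictly decreasing on [0,1] with S(1) = 0. Set Δ = (S(0) − S(κ*))/m, put κ_1 = κ*, and for t = 2, …, m let κ_t ∈ [0, κ*] satisfy S(κ_t) = S(κ*) + (t−1)·Δ. Then ∫_0^{κ*} R'(q)·S(q) dq ≤ (m/(m−2)) · ( R(κ*)·S(κ*) + ∑_{t=2}^{m} R(κ_t)·Δ ). (That is, an absolute threshold mechanism with m badges achieves an m/(m−2)-approximation to the optimal expected per-user contribution when the status function is concave.) -/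
/-! On `[0, κ*]` the thresholds `0 = κ_{m+1} ≤ κ_m ≤ … ≤ κ_1 = κ*` cut the integral into pieces on
which `R' ≥ 0` and `S ≤ S(κ_{t+1}) = S(κ*) + tΔ`; bounding each piece and summing by parts gives
`OPT ≤ ALG + R(κ*)Δ`. Concavity of `S` places `κ_t` above `(1 - (t-1)/m)κ*`, so concavity and
monotonicity of `R` give `R(κ_t) ≥ (1 - (t-1)/m) R(κ*)`, whence
`∑_{t ≥ 2} R(κ_t) ≥ (m-1)/2 · R(κ*)`. This absorbs the extra `R(κ*)Δ` at the price of the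
factor `m/(m-2)`. -/

open MeasureTheory intervalIntegral Finset

section

open Set

theorem ConcaveOn.monotoneOn_of_isMaxOn {s : Set ℝ} {f : ℝ → ℝ} {c : ℝ}
    (hf : ConcaveOn ℝ s f) (hc : IsMaxOn f s c) (hcs : c ∈ s) :
    MonotoneOn f (s ∩ Iic c) := by
  rintro x ⟨hxs, -⟩ y ⟨hys, hyc : y ≤ c⟩ hxy
  rcases hyc.eq_or_lt with rfl | hyc
  · exact hc hxs
  · exact hf.left_le_of_le_right'' hxs hcs hxy hyc (hc hys)

theorem ConcaveOn.intervalIntegrable_deriv {f : ℝ → ℝ} {a b x y : ℝ}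
    (hf : ConcaveOn ℝ (Icc a b) f) (hfd : DifferentiableOn ℝ f (Icc a b))
    (hx : x ∈ Icc a b) (hy : y ∈ Icc a b) : IntervalIntegrable (deriv f) volume x y := by
  refine ((hf.antitoneOn_derivWithin hfd).mono (uIcc_subset_Icc hx hy)).intervalIntegrable
    |>.congr_uIoo fun q hq => derivWithin_of_mem_nhds (Icc_mem_nhds ?_ ?_)
  · exact (le_inf hx.1 hy.1).trans_lt hq.1
  · exact hq.2.trans_le (sup_le hx.2 hy.2)

theorem integral_deriv_mul_le_of_monotoneOn_of_antitoneOn {f g : ℝ → ℝ} {x y : ℝ} (hxy : x ≤ y)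
    (hfd : DifferentiableOn ℝ f (Icc x y)) (hfm : MonotoneOn f (Icc x y))
    (hint : IntervalIntegrable (deriv f) volume x y)
    (hg : AntitoneOn g (Icc x y)) (hg_cont : ContinuousOn g (Icc x y)) :
    ∫ q in x..y, deriv f q * g q ≤ (f y - f x) * g x := by
  have hderiv : ∀ q ∈ Ioo x y, HasDerivAt f (deriv f q) q := fun q hq =>
    ((hfd q (Ioo_subset_Icc_self hq)).differentiableAt (Icc_mem_nhds hq.1 hq.2)).hasDerivAt
  calc ∫ q in x..y, deriv f q * g q ≤ ∫ q in x..y, deriv f q * g x := by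
        refine integral_mono_on_of_le_Ioo hxy
          (hint.mul_continuousOn (by rwa [uIcc_of_le hxy])) (hint.mul_const _) fun q hq => ?_
        refine mul_le_mul_of_nonneg_left
          (hg (left_mem_Icc.2 hxy) (Ioo_subset_Icc_self hq) hq.1.le) ?_
        rw [← derivWithin_of_mem_nhds (Icc_mem_nhds hq.1 hq.2)]
        exact hfm.derivWithin_nonneg
    _ = (f y - f x) * g x := by
        rw [intervalIntegral.integral_mul_const,
          integral_eq_sub_of_hasDerivAt_of_le hxy hfd.continuousOn hderiv hint]

theorem sum_range_sub_mul_add_mul {α : Type*} [CommRing α] (r : ℕ → α) (s Δ : α) (n : ℕ) :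
    ∑ j ∈ range n, (r j - r (j + 1)) * (s + (j + 1) * Δ) =
      r 0 * s - r n * (s + n * Δ) + Δ * ∑ j ∈ range n, r j := by
  induction n with
  | zero => simp
  | succ n ih => rw [sum_range_succ, sum_range_succ, ih]; push_cast; ring

theorem integral_deriv_mul_le_of_equally_spaced_levels {f g : ℝ → ℝ} {a b s Δ : ℝ}
    (hf : ConcaveOn ℝ (Icc a b) f) (hfd : DifferentiableOn ℝ f (Icc a b))
    (hfm : MonotoneOn f (Icc a b)) (hg : StrictAntiOn g (Icc a b))
    (hg_cont : ContinuousOn g (Icc a b)) (c : ℕ → ℝ) (n : ℕ) (hc : ∀ j ≤ n, c j ∈ Icc a b)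
    (hlevels : ∀ j ≤ n, g (c j) = s + j * Δ) (hΔ : 0 ≤ Δ) :
    ∫ q in c n..c 0, deriv f q * g q ≤
      f (c 0) * s - f (c n) * (s + n * Δ) + Δ * ∑ j ∈ range n, f (c j) := by
  have hle : ∀ j < n, c (j + 1) ≤ c j := fun j hj => by
    rw [← hg.le_iff_ge (hc j hj.le) (hc (j + 1) hj), hlevels j hj.le, hlevels (j + 1) hj]
    push_cast
    linarith
  have hsub : ∀ j < n, Icc (c (j + 1)) (c j) ⊆ Icc a b := fun j hj =>
    Icc_subset_Icc (hc (j + 1) hj).1 (hc j hj.le).2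
  calc ∫ q in c n..c 0, deriv f q * g q
      = ∑ j ∈ range n, ∫ q in c (j + 1)..c j, deriv f q * g q := by
        rw [integral_symm, ← sum_integral_adjacent_intervals fun j hj =>
          (hf.intervalIntegrable_deriv hfd (hc j hj.le) (hc (j + 1) hj)).mul_continuousOn
            (hg_cont.mono (uIcc_subset_Icc (hc j hj.le) (hc (j + 1) hj))), ← sum_neg_distrib]
        exact sum_congr rfl fun j _ => (integral_symm _ _).symm
    _ ≤ ∑ j ∈ range n, (f (c j) - f (c (j + 1))) * g (c (j + 1)) := by
        refine sum_le_sum fun j hj => ?_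
        have hj : j < n := mem_range.1 hj
        exact integral_deriv_mul_le_of_monotoneOn_of_antitoneOn (hle j hj)
          (hfd.mono (hsub j hj)) (hfm.mono (hsub j hj))
          (hf.intervalIntegrable_deriv hfd (hc (j + 1) hj) (hc j hj.le))
          (hg.antitoneOn.mono (hsub j hj)) (hg_cont.mono (hsub j hj))
    _ = ∑ j ∈ range n, (f (c j) - f (c (j + 1))) * (s + (j + 1) * Δ) :=
        sum_congr rfl fun j hj => by rw [hlevels (j + 1) (mem_range.1 hj), Nat.cast_succ]
    _ = _ := sum_range_sub_mul_add_mul _ s Δ n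

theorem sum_range_one_sub_div {n : ℕ} (hn : n ≠ 0) :
    ∑ j ∈ range n, (1 - (j : ℝ) / n) = (n + 1) / 2 := by
  have gauss : ∀ k : ℕ, (∑ j ∈ range k, (j : ℝ)) * 2 = k * (k - 1) := fun k => by
    induction k with
    | zero => simp
    | succ k ih => rw [sum_range_succ, add_mul, ih]; push_cast; ring
  rw [sum_sub_distrib, ← sum_div, sum_const, card_range, nsmul_one]
  field_simp
  linarith [gauss n]

theorem mul_le_apply_of_le_combination {R S : ℝ → ℝ} {κ q θ : ℝ}
    (hR : ConcaveOn ℝ (Icc 0 1) R) (hR0 : R 0 = 0) (hRm : MonotoneOn R (Icc 0 κ))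
    (hS : ConcaveOn ℝ (Icc 0 1) S) (hS_anti : StrictAntiOn S (Icc 0 1))
    (hκ : κ ∈ Icc (0 : ℝ) 1) (hq : q ∈ Icc 0 κ) (hθ : θ ∈ Icc (0 : ℝ) 1)
    (hSq : S q ≤ θ * S κ + (1 - θ) * S 0) : θ * R κ ≤ R q := by
  have hp : θ * κ ∈ Icc 0 κ := ⟨mul_nonneg hθ.1 hκ.1, mul_le_of_le_one_left hκ.1 hθ.2⟩
  have hconcave : ∀ F, ConcaveOn ℝ (Icc 0 1) F → θ * F κ + (1 - θ) * F 0 ≤ F (θ * κ) :=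
    fun F hF => by
      simpa using hF.2 hκ (left_mem_Icc.2 zero_le_one) hθ.1 (sub_nonneg.2 hθ.2) (by ring)
  have hpq : θ * κ ≤ q :=
    (hS_anti.le_iff_ge ⟨hq.1, hq.2.trans hκ.2⟩ ⟨hp.1, hp.2.trans hκ.2⟩).1
      (hSq.trans (hconcave S hS))
  calc θ * R κ = θ * R κ + (1 - θ) * R 0 := by rw [hR0]; ring
    _ ≤ R (θ * κ) := hconcave R hR
    _ ≤ R q := hRm hp hq hpq

theorem mul_le_sum_of_equally_spaced_levels {R S : ℝ → ℝ} {κ Δ : ℝ} {n : ℕ} (hn : n ≠ 0)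
    (hR : ConcaveOn ℝ (Icc 0 1) R) (hR0 : R 0 = 0) (hRm : MonotoneOn R (Icc 0 κ))
    (hS : ConcaveOn ℝ (Icc 0 1) S) (hS_anti : StrictAntiOn S (Icc 0 1))
    (hκ : κ ∈ Icc (0 : ℝ) 1) (c : ℕ → ℝ) (hc : ∀ j ≤ n, c j ∈ Icc 0 κ)
    (hlevels : ∀ j ≤ n, S (c j) = S κ + j * Δ) (hΔ : Δ = (S 0 - S κ) / n) :
    (n + 1) / 2 * R κ ≤ ∑ j ∈ range n, R (c j) := by
  rw [← sum_range_one_sub_div hn, sum_mul]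
  refine sum_le_sum fun j hj => ?_
  have hj : j ≤ n := (mem_range.1 hj).le
  refine mul_le_apply_of_le_combination hR hR0 hRm hS hS_anti hκ (hc j hj) ⟨?_, ?_⟩ (le_of_eq ?_)
  · exact sub_nonneg.2 (div_le_one_of_le₀ (by exact_mod_cast hj) n.cast_nonneg)
  · exact sub_le_self _ (by positivity)
  · rw [hlevels j hj, hΔ]
    field_simp
    ring

-- `extendedThresholds κ m j = κ_{j+1}` for `j < m`, closed off by `κ_{m+1} = 0`.
def extendedThresholds (κ : ℕ → ℝ) (m j : ℕ) : ℝ := if j < m then κ (j + 1) else 0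

theorem extendedThresholds_mem {κ : ℕ → ℝ} {m : ℕ} {κstar : ℝ} (hκstar : 0 ≤ κstar)
    (hκ1 : κ 1 = κstar) (hκ : ∀ t, 2 ≤ t → t ≤ m → κ t ∈ Icc 0 κstar) (j : ℕ) :
    extendedThresholds κ m j ∈ Icc 0 κstar := by
  unfold extendedThresholds
  split_ifs with hj
  · rcases j with _ | j
    · rw [zero_add, hκ1]
      exact ⟨hκstar, le_rfl⟩
    · exact hκ (j + 1 + 1) (by omega) (by omega)
  · exact ⟨le_rfl, hκstar⟩

theorem status_extendedThresholds {κ : ℕ → ℝ} {m : ℕ} {κstar Δ : ℝ} {S : ℝ → ℝ} (hm : m ≠ 0)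
    (hΔ : Δ = (S 0 - S κstar) / m) (hκ1 : κ 1 = κstar)
    (hκ : ∀ t, 2 ≤ t → t ≤ m → S (κ t) = S κstar + (t - 1 : ℝ) * Δ) (j : ℕ) (hj : j ≤ m) :
    S (extendedThresholds κ m j) = S κstar + j * Δ := by
  unfold extendedThresholds
  split_ifs with hjm
  · rcases j with _ | j
    · simp [hκ1]
    · rw [hκ (j + 1 + 1) (by omega) (by omega)]
      push_cast
      ring
  · obtain rfl : j = m := by omega
    rw [hΔ]
    field_simp
    ring

theorem extendedThresholds_zero {κ : ℕ → ℝ} {m : ℕ} (hm : m ≠ 0) :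
    extendedThresholds κ m 0 = κ 1 := by
  simp [extendedThresholds, Nat.pos_of_ne_zero hm]

theorem extendedThresholds_self (κ : ℕ → ℝ) (m : ℕ) : extendedThresholds κ m m = 0 := by
  simp [extendedThresholds]

theorem sum_range_extendedThresholds (f : ℝ → ℝ) (κ : ℕ → ℝ) {m : ℕ} (hm : m ≠ 0) :
    ∑ j ∈ range m, f (extendedThresholds κ m j) = f (κ 1) + ∑ t ∈ Finset.Icc 2 m, f (κ t) := by
  have hκ : ∀ j ∈ range m, f (extendedThresholds κ m j) = f (κ (j + 1)) := fun j hj => by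
    rw [extendedThresholds, if_pos (mem_range.1 hj)]
  rw [sum_congr rfl hκ, range_eq_Ico, sum_Ico_add' fun t => f (κ t), zero_add,
    Finset.Ico_add_one_right_eq_Icc, ← Finset.insert_Icc_add_one_left_eq_Icc (by omega : 1 ≤ m),
    sum_insert (by simp)]
  rfl

end

theorem multi_badge_approx_concave_general
    (m : ℕ) (hm : 3 ≤ m)
    (R : ℝ → ℝ)
    (hR_diff : DifferentiableOn ℝ R (Set.Icc 0 1))
    (hR_concave : ConcaveOn ℝ (Set.Icc 0 1) R)
    (hR0 : R 0 = 0)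
    (κstar : ℝ) (hκ : κstar ∈ Set.Icc (0:ℝ) 1)
    (hκ_max : ∀ q ∈ Set.Icc (0:ℝ) 1, R q ≤ R κstar)
    (S : ℝ → ℝ)
    (hS_diff : DifferentiableOn ℝ S (Set.Icc 0 1))
    (hS_concave : ConcaveOn ℝ (Set.Icc 0 1) S)
    (hS_anti : StrictAntiOn S (Set.Icc 0 1))
    (hS1 : S 1 = 0)
    (Δ : ℝ) (hΔ : Δ = (S 0 - S κstar) / m)
    (κ : ℕ → ℝ) (hκ1 : κ 1 = κstar)
    (hκt_mem : ∀ t, 2 ≤ t → t ≤ m → κ t ∈ Set.Icc (0:ℝ) κstar)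
    (hκt_val : ∀ t, 2 ≤ t → t ≤ m → S (κ t) = S κstar + (t - 1 : ℝ) * Δ) :
    (∫ q in (0:ℝ)..κstar, deriv R q * S q) ≤
      (m / (m - 2 : ℝ)) * (R κstar * S κstar + ∑ t ∈ Finset.Icc 2 m, R (κ t) * Δ) := by
  have hm0 : m ≠ 0 := by omega
  have h0 : (0 : ℝ) ∈ Set.Icc (0 : ℝ) 1 := Set.left_mem_Icc.2 zero_le_one
  have hsub : Set.Icc 0 κstar ⊆ Set.Icc (0 : ℝ) 1 := Set.Icc_subset_Icc le_rfl hκ.2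
  have hRm : MonotoneOn R (Set.Icc 0 κstar) :=
    (hR_concave.monotoneOn_of_isMaxOn (isMaxOn_iff.2 hκ_max) hκ).mono fun q hq => ⟨hsub hq, hq.2⟩
  have hΔ0 : 0 ≤ Δ := hΔ ▸ div_nonneg (sub_nonneg.2 (hS_anti.antitoneOn h0 hκ hκ.1)) m.cast_nonneg
  have hc_mem := extendedThresholds_mem hκ.1 hκ1 hκt_mem
  have hc_levels := status_extendedThresholds hm0 hΔ hκ1 hκt_val
  have hupper := integral_deriv_mul_le_of_equally_spaced_levels
    (hR_concave.subset hsub (convex_Icc 0 κstar)) (hR_diff.mono hsub) hRm (hS_anti.mono hsub)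
    (hS_diff.continuousOn.mono hsub) _ m (fun j _ => hc_mem j) hc_levels hΔ0
  have hlower := mul_le_sum_of_equally_spaced_levels hm0 hR_concave hR0 hRm hS_concave hS_anti hκ
    _ (fun j _ => hc_mem j) hc_levels hΔ
  rw [extendedThresholds_zero hm0, extendedThresholds_self, hR0, zero_mul, sub_zero,
    sum_range_extendedThresholds _ _ hm0, hκ1] at hupper
  rw [sum_range_extendedThresholds _ _ hm0, hκ1] at hlower
  have hRκ : 0 ≤ R κstar := hR0 ▸ hκ_max 0 h0
  have hSκ : 0 ≤ S κstar := hS1 ▸ hS_anti.antitoneOn hκ (Set.right_mem_Icc.2 zero_le_one) hκ.2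
  have hm2 : (0 : ℝ) < m - 2 := by
    have : (3 : ℝ) ≤ m := by exact_mod_cast hm
    linarith
  rw [← sum_mul, div_mul_eq_mul_div, le_div_iff₀ hm2]
  linarith [mul_le_mul_of_nonneg_left hupper hm2.le, mul_le_mul_of_nonneg_left hlower hΔ0,
    mul_nonneg hRκ hSκ, mul_nonneg hRκ hΔ0]

theorem multi_badge_approx_concave
    (m : ℕ) (hm : 3 ≤ m)
    (R : ℝ → ℝ)
    (hR_diff : DifferentiableOn ℝ R (Set.Icc 0 1))
    (hR_concave : ConcaveOn ℝ (Set.Icc 0 1) R)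
    (hR0 : R 0 = 0) (hR1 : R 1 = 0)
    (κstar : ℝ) (hκ : κstar ∈ Set.Icc (0:ℝ) 1)
    (hκ_max : ∀ q ∈ Set.Icc (0:ℝ) 1, R q ≤ R κstar)
    (S : ℝ → ℝ)
    (hS_diff : DifferentiableOn ℝ S (Set.Icc 0 1))
    (hS_concave : ConcaveOn ℝ (Set.Icc 0 1) S)
    (hS_anti : StrictAntiOn S (Set.Icc 0 1))
    (hS1 : S 1 = 0)
    (Δ : ℝ) (hΔ : Δ = (S 0 - S κstar) / m)
    (κ : ℕ → ℝ) (hκ1 : κ 1 = κstar)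
    (hκt_mem : ∀ t, 2 ≤ t → t ≤ m → κ t ∈ Set.Icc (0:ℝ) κstar)
    (hκt_val : ∀ t, 2 ≤ t → t ≤ m → S (κ t) = S κstar + (t - 1 : ℝ) * Δ) :
    (∫ q in (0:ℝ)..κstar, deriv R q * S q) ≤
      (m / (m - 2 : ℝ)) * (R κstar * S κstar + ∑ t ∈ Finset.Icc 2 m, R (κ t) * Δ) :=
  multi_badge_approx_concave_general m hm R hR_diff hR_concave hR0 κstar hκ hκ_max S hS_diff
    hS_concave hS_anti hS1 Δ hΔ κ hκ1 hκt_mem hκt_val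
end

section
/- Let R : ℝ → ℝ be differentiable and concave on [0,1] with R(0) = R(1) = 0, and let κ* ∈ [0,1] be a point where R attains its maximum over [0,1]. Let S : ℝ → ℝ be differentiable, convex, and nonincreasing on [0,1] with S(1) = 0. Then ∫_0^{κ*} R'(q)·S(q) dq ≤ 2 · ∫_0^{1} R'(q)·S(q) dq. (That is, for any convex status function, the leaderboard mechanism is a 2-approximation to the optimal badge mechanism.) -/
/-!
Write `M = R κ*` and `s = S κ*`. On `[0, κ*]` we have `R' ≥ 0` and `S ≥ s`, so the integral
over `[0, κ*]` is at least `M s`. On `[κ*, 1]` we have `R' ≤ 0` and, by convexity, `S` lies below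
its chord `(1 - q) s / (1 - κ*)`; integrating `R'(q) (1 - q)` by parts and bounding `∫ R` from
below by the trapezoid `(1 - κ*) M / 2` (concavity) shows that the integral over `[κ*, 1]` is at
least `-M s / 2`. So the integral over `[0, 1]` is at least the one over `[0, κ*]` minus `M s / 2`,
hence at least half of it.
-/

open MeasureTheory intervalIntegral Set

theorem ConvexOn.mul_le_secant {s : Set ℝ} {f : ℝ → ℝ} (hf : ConvexOn ℝ s f) {x y z : ℝ}
    (hx : x ∈ s) (hz : z ∈ s) (hxy : x ≤ y) (hyz : y ≤ z) :
    (z - x) * f y ≤ (z - y) * f x + (y - x) * f z := by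
  rcases hxy.eq_or_lt with rfl | hxy
  · simp
  rcases hyz.eq_or_lt with rfl | hyz
  · simp
  exact hf.secant_mono_aux1 hx hz hxy hyz

theorem ConcaveOn.secant_le_mul {s : Set ℝ} {f : ℝ → ℝ} (hf : ConcaveOn ℝ s f) {x y z : ℝ}
    (hx : x ∈ s) (hz : z ∈ s) (hxy : x ≤ y) (hyz : y ≤ z) :
    (z - y) * f x + (y - x) * f z ≤ (z - x) * f y := by
  have := hf.neg.mul_le_secant hx hz hxy hyz
  simp only [Pi.neg_apply] at this
  linarith

theorem ConcaveOn.nonneg_of_hasDerivAt_of_le {s : Set ℝ} {f : ℝ → ℝ} {f' x y : ℝ}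
    (hf : ConcaveOn ℝ s f) (hx : x ∈ s) (hy : y ∈ s) (hxy : x < y) (hle : f x ≤ f y)
    (hf' : HasDerivAt f f' x) : 0 ≤ f' := by
  refine le_trans ?_ (hf.slope_le_of_hasDerivAt hx hy hxy hf')
  rw [slope_def_field]
  exact div_nonneg (sub_nonneg.2 hle) (sub_nonneg.2 hxy.le)

theorem ConcaveOn.nonpos_of_hasDerivAt_of_le {s : Set ℝ} {f : ℝ → ℝ} {f' x y : ℝ}
    (hf : ConcaveOn ℝ s f) (hx : x ∈ s) (hy : y ∈ s) (hxy : x < y) (hle : f y ≤ f x)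
    (hf' : HasDerivAt f f' y) : f' ≤ 0 := by
  refine (hf.le_slope_of_hasDerivAt hx hy hxy hf').trans ?_
  rw [slope_def_field]
  exact div_nonpos_of_nonpos_of_nonneg (sub_nonpos.2 hle) (sub_nonneg.2 hxy.le)

theorem IntervalIntegrable.mul_antitoneOn {f g : ℝ → ℝ} {a b : ℝ}
    (hf : IntervalIntegrable f volume a b) (hg : AntitoneOn g (uIcc a b)) :
    IntervalIntegrable (fun x => f x * g x) volume a b := by
  rw [intervalIntegrable_iff] at hf ⊢
  refine hf.mul_bdd (c := max |g (min a b)| |g (max a b)|)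
    (intervalIntegrable_iff.1 hg.intervalIntegrable).aestronglyMeasurable ?_
  refine ae_restrict_of_forall_mem measurableSet_uIoc fun x hx => ?_
  have hx : x ∈ uIcc a b := uIoc_subset_uIcc hx
  have hmin : min a b ∈ uIcc a b := ⟨le_rfl, min_le_max⟩
  have hmax : max a b ∈ uIcc a b := ⟨min_le_max, le_rfl⟩
  have h₁ := hg hx hmax hx.2
  have h₂ := hg hmin hx hx.1
  rw [Real.norm_eq_abs, abs_le]
  constructor
  · linarith [neg_abs_le (g (max a b)), le_max_right |g (min a b)| |g (max a b)|]
  · linarith [le_abs_self (g (min a b)), le_max_left |g (min a b)| |g (max a b)|]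

theorem ConcaveOn.trapezoid_le_integral {f : ℝ → ℝ} {a b : ℝ} (hab : a ≤ b)
    (hf : ConcaveOn ℝ (Icc a b) f) (hfc : ContinuousOn f (Icc a b)) :
    (b - a) * ((f a + f b) / 2) ≤ ∫ x in a..b, f x := by
  have hchord : ∀ x ∈ Icc a b, (b - x) * f a + (x - a) * f b ≤ (b - a) * f x := fun x hx =>
    hf.secant_le_mul (left_mem_Icc.2 hab) (right_mem_Icc.2 hab) hx.1 hx.2
  have hchord_cont : Continuous fun x => (b - x) * f a + (x - a) * f b := by fun_prop
  have hmono := integral_mono_on (μ := volume) hab (hchord_cont.intervalIntegrable a b)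
    ((hfc.intervalIntegrable_of_Icc hab).const_mul (b - a)) hchord
  have hlin :
      ∫ x in a..b, ((b - x) * f a + (x - a) * f b) = (b - a) ^ 2 * ((f a + f b) / 2) := by
    have h : (fun x => (b - x) * f a + (x - a) * f b) =
        fun x => (b * f a - a * f b) + (f b - f a) * x := by
      ext x; ring
    rw [h, intervalIntegral.integral_add intervalIntegrable_const (intervalIntegrable_id.const_mul _),
      intervalIntegral.integral_const_mul, integral_id, intervalIntegral.integral_const, smul_eq_mul]
    ring
  rw [hlin, intervalIntegral.integral_const_mul] at hmono
  rcases hab.eq_or_lt with rfl | hab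
  · simp
  rw [sq, mul_assoc] at hmono
  exact le_of_mul_le_mul_left hmono (sub_pos.2 hab)

section

variable {f f' : ℝ → ℝ} {a b : ℝ}

theorem intervalIntegrable_of_hasDerivAt_of_nonneg (hab : a ≤ b) (hf : ContinuousOn f (Icc a b))
    (hf' : ∀ x ∈ Ioo a b, HasDerivAt f (f' x) x) (hpos : ∀ x ∈ Ioo a b, 0 ≤ f' x) :
    IntervalIntegrable f' volume a b :=
  (intervalIntegrable_iff_integrableOn_Ioc_of_le hab).2 (integrableOn_deriv_of_nonneg hf hf' hpos)

theorem intervalIntegrable_of_hasDerivAt_of_nonpos (hab : a ≤ b) (hf : ContinuousOn f (Icc a b))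
    (hf' : ∀ x ∈ Ioo a b, HasDerivAt f (f' x) x) (hneg : ∀ x ∈ Ioo a b, f' x ≤ 0) :
    IntervalIntegrable f' volume a b := by
  simpa using (intervalIntegrable_of_hasDerivAt_of_nonneg (f := -f) (f' := -f') hab hf.neg
    (fun x hx => (hf' x hx).neg) fun x hx => neg_nonneg.2 (hneg x hx)).neg

theorem integral_deriv_mul_sub_eq (hab : a ≤ b) (hf : ContinuousOn f (Icc a b))
    (hf' : ∀ x ∈ Ioo a b, HasDerivAt f (f' x) x) (hf'int : IntervalIntegrable f' volume a b) :
    ∫ x in a..b, f' x * (b - x) = (∫ x in a..b, f x) - (b - a) * f a := by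
  have := integral_mul_deriv_eq_deriv_mul_of_hasDerivAt (u := fun x => b - x) (u' := fun _ => -1)
    (v := f) (v' := f') (a := a) (b := b) (by fun_prop) (by rwa [uIcc_of_le hab])
    (fun x _ => (hasDerivAt_id x).const_sub b) (by rwa [min_eq_left hab, max_eq_right hab])
    intervalIntegrable_const hf'int
  simp only [sub_self, zero_mul, zero_sub, neg_one_mul, intervalIntegral.integral_neg] at this
  simp only [mul_comm (f' _)]
  linarith

variable {g : ℝ → ℝ}

theorem sub_mul_le_integral_deriv_mul (hab : a ≤ b) (hf : ContinuousOn f (Icc a b))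
    (hf' : ∀ x ∈ Ioo a b, HasDerivAt f (f' x) x) (hf'_nonneg : ∀ x ∈ Ioo a b, 0 ≤ f' x)
    (hg : AntitoneOn g (Icc a b)) :
    (f b - f a) * g b ≤ ∫ x in a..b, f' x * g x := by
  have hf'int := intervalIntegrable_of_hasDerivAt_of_nonneg hab hf hf' hf'_nonneg
  calc (f b - f a) * g b = ∫ x in a..b, f' x * g b := by
        rw [intervalIntegral.integral_mul_const,
          integral_eq_sub_of_hasDerivAt_of_le hab hf hf' hf'int]
    _ ≤ ∫ x in a..b, f' x * g x := by
        refine integral_mono_on_of_le_Ioo hab (hf'int.mul_const _)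
          (hf'int.mul_antitoneOn (by rwa [uIcc_of_le hab])) fun x hx => ?_
        exact mul_le_mul_of_nonneg_left
          (hg (Ioo_subset_Icc_self hx) (right_mem_Icc.2 hab) hx.2.le) (hf'_nonneg x hx)

theorem neg_half_mul_le_integral_deriv_mul (hab : a < b) (hf : ConcaveOn ℝ (Icc a b) f)
    (hfc : ContinuousOn f (Icc a b)) (hf' : ∀ x ∈ Ioo a b, HasDerivAt f (f' x) x)
    (hf'_nonpos : ∀ x ∈ Ioo a b, f' x ≤ 0) (hfb : f b = 0) (hg : ConvexOn ℝ (Icc a b) g)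
    (hg_anti : AntitoneOn g (Icc a b)) (hgb : g b = 0) :
    -(f a * g a / 2) ≤ ∫ x in a..b, f' x * g x := by
  have ha : a ∈ Icc a b := left_mem_Icc.2 hab.le
  have hb : b ∈ Icc a b := right_mem_Icc.2 hab.le
  have hga : 0 ≤ g a := hgb ▸ hg_anti ha hb hab.le
  have hf'int := intervalIntegrable_of_hasDerivAt_of_nonpos hab.le hfc hf' hf'_nonpos
  have hsecant : ∀ x ∈ Ioo a b, g a * (f' x * (b - x)) ≤ (b - a) * (f' x * g x) := by
    intro x hx
    have := hg.mul_le_secant ha hb hx.1.le hx.2.le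
    rw [hgb, mul_zero, add_zero] at this
    nlinarith [hf'_nonpos x hx]
  have hmono :
      g a * ((∫ x in a..b, f x) - (b - a) * f a) ≤ (b - a) * ∫ x in a..b, f' x * g x := by
    rw [← integral_deriv_mul_sub_eq hab.le hfc hf' hf'int, ← intervalIntegral.integral_const_mul,
      ← intervalIntegral.integral_const_mul]
    exact integral_mono_on_of_le_Ioo hab.le ((hf'int.mul_continuousOn (by fun_prop)).const_mul _)
      ((hf'int.mul_antitoneOn (by rwa [uIcc_of_le hab.le])).const_mul _) hsecant
  have htrapezoid := hf.trapezoid_le_integral hab.le hfc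
  rw [hfb, add_zero] at htrapezoid
  refine le_of_mul_le_mul_left ?_ (sub_pos.2 hab)
  calc (b - a) * -(f a * g a / 2) = g a * ((b - a) * (f a / 2) - (b - a) * f a) := by ring
    _ ≤ g a * ((∫ x in a..b, f x) - (b - a) * f a) := by gcongr
    _ ≤ (b - a) * ∫ x in a..b, f' x * g x := hmono

end

theorem leaderboard_two_approx_convex_general
    (R : ℝ → ℝ)
    (hR_diff : DifferentiableOn ℝ R (Set.Icc 0 1))
    (hR_concave : ConcaveOn ℝ (Set.Icc 0 1) R)
    (hR0 : R 0 = 0) (hR1 : R 1 = 0)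
    (κstar : ℝ) (hκ : κstar ∈ Set.Icc (0:ℝ) 1)
    (hκ_max : ∀ q ∈ Set.Icc (0:ℝ) 1, R q ≤ R κstar)
    (S : ℝ → ℝ)
    (hS_convex : ConvexOn ℝ (Set.Icc 0 1) S)
    (hS_anti : AntitoneOn S (Set.Icc 0 1))
    (hS1 : S 1 = 0) :
    (∫ q in (0:ℝ)..κstar, deriv R q * S q) ≤ 2 * ∫ q in (0:ℝ)..1, deriv R q * S q := by
  obtain ⟨hκ0, hκ1⟩ := hκ
  have hleft : Icc 0 κstar ⊆ Icc (0:ℝ) 1 := Icc_subset_Icc_right hκ1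
  have hright : Icc κstar 1 ⊆ Icc (0:ℝ) 1 := Icc_subset_Icc_left hκ0
  have hRc := hR_diff.continuousOn
  have hR' : ∀ x ∈ Ioo (0:ℝ) 1, HasDerivAt R (deriv R x) x := fun x hx =>
    (hR_diff.differentiableAt (Icc_mem_nhds hx.1 hx.2)).hasDerivAt
  have hR'_left : ∀ x ∈ Ioo 0 κstar, HasDerivAt R (deriv R x) x := fun x hx =>
    hR' x ⟨hx.1, hx.2.trans_le hκ1⟩
  have hR'_right : ∀ x ∈ Ioo κstar 1, HasDerivAt R (deriv R x) x := fun x hx =>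
    hR' x ⟨hκ0.trans_lt hx.1, hx.2⟩
  have hR'_nonneg : ∀ x ∈ Ioo 0 κstar, 0 ≤ deriv R x := fun x hx =>
    have hx' := hleft (Ioo_subset_Icc_self hx)
    hR_concave.nonneg_of_hasDerivAt_of_le hx' ⟨hκ0, hκ1⟩ hx.2 (hκ_max x hx') (hR'_left x hx)
  have hR'_nonpos : ∀ x ∈ Ioo κstar 1, deriv R x ≤ 0 := fun x hx =>
    have hx' := hright (Ioo_subset_Icc_self hx)
    hR_concave.nonpos_of_hasDerivAt_of_le ⟨hκ0, hκ1⟩ hx' hx.1 (hκ_max x hx') (hR'_right x hx)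
  have hint_left : IntervalIntegrable (fun q => deriv R q * S q) volume 0 κstar :=
    (intervalIntegrable_of_hasDerivAt_of_nonneg hκ0 (hRc.mono hleft) hR'_left
      hR'_nonneg).mul_antitoneOn (hS_anti.mono (uIcc_of_le hκ0 ▸ hleft))
  have hint_right : IntervalIntegrable (fun q => deriv R q * S q) volume κstar 1 :=
    (intervalIntegrable_of_hasDerivAt_of_nonpos hκ1 (hRc.mono hright) hR'_right
      hR'_nonpos).mul_antitoneOn (hS_anti.mono (uIcc_of_le hκ1 ▸ hright))
  have hlower : R κstar * S κstar ≤ ∫ q in (0:ℝ)..κstar, deriv R q * S q := by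
    simpa [hR0] using sub_mul_le_integral_deriv_mul hκ0 (hRc.mono hleft) hR'_left hR'_nonneg
      (hS_anti.mono hleft)
  rw [← integral_add_adjacent_intervals hint_left hint_right]
  rcases hκ1.eq_or_lt with rfl | hκ1
  · rw [hR1, zero_mul] at hlower
    simp only [integral_same, add_zero]
    linarith
  have hupper : -(R κstar * S κstar / 2) ≤ ∫ q in κstar..1, deriv R q * S q :=
    neg_half_mul_le_integral_deriv_mul hκ1 (hR_concave.subset hright (convex_Icc _ _))
      (hRc.mono hright) hR'_right hR'_nonpos hR1 (hS_convex.subset hright (convex_Icc _ _))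
      (hS_anti.mono hright) hS1
  linarith

theorem leaderboard_two_approx_convex
    (R : ℝ → ℝ)
    (hR_diff : DifferentiableOn ℝ R (Set.Icc 0 1))
    (hR_concave : ConcaveOn ℝ (Set.Icc 0 1) R)
    (hR0 : R 0 = 0) (hR1 : R 1 = 0)
    (κstar : ℝ) (hκ : κstar ∈ Set.Icc (0:ℝ) 1)
    (hκ_max : ∀ q ∈ Set.Icc (0:ℝ) 1, R q ≤ R κstar)
    (S : ℝ → ℝ)
    (hS_diff : DifferentiableOn ℝ S (Set.Icc 0 1))
    (hS_convex : ConvexOn ℝ (Set.Icc 0 1) S)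
    (hS_anti : AntitoneOn S (Set.Icc 0 1))
    (hS1 : S 1 = 0) :
    (∫ q in (0:ℝ)..κstar, deriv R q * S q) ≤ 2 * ∫ q in (0:ℝ)..1, deriv R q * S q :=
  leaderboard_two_approx_convex_general R hR_diff hR_concave hR0 hR1 κstar hκ hκ_max S hS_convex
    hS_anti hS1
end

section
/- Let R : ℝ → ℝ be differentiable and concave on [0,1] with R(0) = 0, and let κ* ∈ [0,1] be a point where R attains its maximum over [0,1]. Then for every measurable function x : [0,1] → [0,1], ∫_0^{1} R'(q)·x(q) dq ≤ R(κ*). (That is, the expected per-user contribution of any badge mechanism is at most the monopoly revenue R(κ*).) -/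
open MeasureTheory intervalIntegral Set

/-!
A concave `R` with a maximum at `κ*` is nondecreasing to the left of `κ*` and nonincreasing to its
right, so `R' ≥ 0` on `(0, κ*)` and `R' ≤ 0` on `(κ*, 1)`. Since `0 ≤ x ≤ 1`, the integrand
`R' x` is at most `R'` on `(0, κ*)` and at most `0` on `(κ*, 1)`, and the fundamental theorem of
calculus bounds the first part by `R κ* - R 0`. If `R' x` is not integrable, the integral is the
junk value `0 = R 0 ≤ R κ*`.
-/

namespace ConcaveOn

variable {R : ℝ → ℝ} {S : Set ℝ} {p q : ℝ}

theorem deriv_nonneg_of_le_of_lt (hR : ConcaveOn ℝ S R) (hp : p ∈ S) (hq : q ∈ S) (hpq : p < q)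
    (hle : R p ≤ R q) (hd : DifferentiableAt ℝ R p) : 0 ≤ deriv R p :=
  calc 0 ≤ slope R p q := by
        rw [slope_def_field]
        exact div_nonneg (sub_nonneg.2 hle) (sub_nonneg.2 hpq.le)
    _ ≤ deriv R p := hR.slope_le_deriv hp hq hpq hd

theorem deriv_nonpos_of_le_of_lt (hR : ConcaveOn ℝ S R) (hp : p ∈ S) (hq : q ∈ S) (hpq : p < q)
    (hle : R q ≤ R p) (hd : DifferentiableAt ℝ R q) : deriv R q ≤ 0 :=
  calc deriv R q ≤ slope R p q := hR.deriv_le_slope hp hq hpq hd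
    _ ≤ 0 := by
        rw [slope_def_field]
        exact div_nonpos_of_nonpos_of_nonneg (sub_nonpos.2 hle) (sub_nonneg.2 hpq.le)

end ConcaveOn

section

variable {R f x : ℝ → ℝ} {a b c : ℝ}

theorem integral_deriv_mul_le_sub_of_deriv_nonneg (hab : a ≤ b)
    (hcont : ContinuousOn R (Icc a b)) (hdiff : DifferentiableOn ℝ R (Ioo a b))
    (hR' : ∀ q ∈ Ioo a b, 0 ≤ deriv R q) (hx : ∀ q ∈ Ioo a b, x q ≤ 1)
    (hint : IntervalIntegrable (fun q ↦ deriv R q * x q) volume a b) :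
    ∫ q in a..b, deriv R q * x q ≤ R b - R a :=
  integral_le_sub_of_hasDeriv_right_of_le hab hcont
    (fun q hq ↦ (hdiff.differentiableAt (isOpen_Ioo.mem_nhds hq)).hasDerivAt.hasDerivWithinAt)
    ((intervalIntegrable_iff_integrableOn_Icc_of_le hab).1 hint)
    (fun q hq ↦ mul_le_of_le_one_right (hR' q hq) (hx q hq))

theorem integral_mul_nonpos_of_nonpos (hab : a ≤ b) (hf : ∀ q ∈ Ioo a b, f q ≤ 0)
    (hx : ∀ q ∈ Ioo a b, 0 ≤ x q) (hint : IntervalIntegrable (fun q ↦ f q * x q) volume a b) :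
    ∫ q in a..b, f q * x q ≤ 0 := by
  simpa using integral_mono_on_of_le_Ioo hab hint intervalIntegrable_const
    fun q hq ↦ mul_nonpos_of_nonpos_of_nonneg (hf q hq) (hx q hq)

theorem ConcaveOn.integral_deriv_mul_le_sub_of_isMaxOn (hR : ConcaveOn ℝ (Icc a b) R)
    (hcont : ContinuousOn R (Icc a b)) (hdiff : DifferentiableOn ℝ R (Ioo a b))
    (hc : c ∈ Icc a b) (hmax : IsMaxOn R (Icc a b) c) (hx : ∀ q ∈ Ioo a b, x q ∈ Icc 0 1)
    (hint : IntervalIntegrable (fun q ↦ deriv R q * x q) volume a b) :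
    ∫ q in a..b, deriv R q * x q ≤ R c - R a := by
  obtain ⟨hac, hcb⟩ := hc
  have hab := hac.trans hcb
  have hsub_left : Ioo a c ⊆ Ioo a b := Ioo_subset_Ioo_right hcb
  have hsub_right : Ioo c b ⊆ Ioo a b := Ioo_subset_Ioo_left hac
  have hdiffAt : ∀ q ∈ Ioo a b, DifferentiableAt ℝ R q :=
    fun q hq ↦ hdiff.differentiableAt (isOpen_Ioo.mem_nhds hq)
  have hR'_left : ∀ q ∈ Ioo a c, 0 ≤ deriv R q := fun q hq ↦
    hR.deriv_nonneg_of_le_of_lt (Ioo_subset_Icc_self (hsub_left hq)) ⟨hac, hcb⟩ hq.2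
      (hmax (Ioo_subset_Icc_self (hsub_left hq))) (hdiffAt q (hsub_left hq))
  have hR'_right : ∀ q ∈ Ioo c b, deriv R q ≤ 0 := fun q hq ↦
    hR.deriv_nonpos_of_le_of_lt ⟨hac, hcb⟩ (Ioo_subset_Icc_self (hsub_right hq)) hq.1
      (hmax (Ioo_subset_Icc_self (hsub_right hq))) (hdiffAt q (hsub_right hq))
  have hint_left : IntervalIntegrable (fun q ↦ deriv R q * x q) volume a c :=
    hint.mono_set (by rw [uIcc_of_le hac, uIcc_of_le hab]; exact Icc_subset_Icc_right hcb)
  have hint_right : IntervalIntegrable (fun q ↦ deriv R q * x q) volume c b :=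
    hint.mono_set (by rw [uIcc_of_le hcb, uIcc_of_le hab]; exact Icc_subset_Icc_left hac)
  have hleft : ∫ q in a..c, deriv R q * x q ≤ R c - R a :=
    integral_deriv_mul_le_sub_of_deriv_nonneg hac (hcont.mono (Icc_subset_Icc_right hcb))
      (hdiff.mono hsub_left) hR'_left (fun q hq ↦ (hx q (hsub_left hq)).2) hint_left
  have hright : ∫ q in c..b, deriv R q * x q ≤ 0 :=
    integral_mul_nonpos_of_nonpos hcb hR'_right (fun q hq ↦ (hx q (hsub_right hq)).1) hint_right
  rw [← integral_add_adjacent_intervals hint_left hint_right]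
  linarith

end

theorem contribution_at_most_monopoly_revenue_general
    (R : ℝ → ℝ)
    (hR_diff : DifferentiableOn ℝ R (Set.Icc 0 1))
    (hR_concave : ConcaveOn ℝ (Set.Icc 0 1) R)
    (hR0 : R 0 = 0)
    (κstar : ℝ) (hκ : κstar ∈ Set.Icc (0:ℝ) 1)
    (hκ_max : ∀ q ∈ Set.Icc (0:ℝ) 1, R q ≤ R κstar)
    (x : ℝ → ℝ)
    (hx_mem : ∀ q ∈ Set.Icc (0:ℝ) 1, x q ∈ Set.Icc (0:ℝ) 1) :
    (∫ q in (0:ℝ)..1, deriv R q * x q) ≤ R κstar := by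
  by_cases hint : IntervalIntegrable (fun q ↦ deriv R q * x q) volume 0 1
  · simpa [hR0] using hR_concave.integral_deriv_mul_le_sub_of_isMaxOn hR_diff.continuousOn
      (hR_diff.mono Ioo_subset_Icc_self) hκ (isMaxOn_iff.2 hκ_max)
      (fun q hq ↦ hx_mem q (Ioo_subset_Icc_self hq)) hint
  · rw [integral_undef hint, ← hR0]
    exact hκ_max 0 (left_mem_Icc.2 zero_le_one)

theorem contribution_at_most_monopoly_revenue
    (R : ℝ → ℝ)
    (hR_diff : DifferentiableOn ℝ R (Set.Icc 0 1))
    (hR_concave : ConcaveOn ℝ (Set.Icc 0 1) R)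
    (hR0 : R 0 = 0)
    (κstar : ℝ) (hκ : κstar ∈ Set.Icc (0:ℝ) 1)
    (hκ_max : ∀ q ∈ Set.Icc (0:ℝ) 1, R q ≤ R κstar)
    (x : ℝ → ℝ) (hx_meas : Measurable x)
    (hx_mem : ∀ q ∈ Set.Icc (0:ℝ) 1, x q ∈ Set.Icc (0:ℝ) 1) :
    (∫ q in (0:ℝ)..1, deriv R q * x q) ≤ R κstar :=
  contribution_at_most_monopoly_revenue_general R hR_diff hR_concave hR0 κstar hκ hκ_max x hx_mem
end

section
/- Let R : ℝ → ℝ be differentiable and concave on [0,1] with R(0) = R(1) = 0, and let κ* ∈ [0,1] be a point where R attains its maximum over [0,1]. Then for every measurable function x : [0,1] → [0,1], ∫_0^{1} R'(q)·x(q) dq ≤ 4 · (1/2)·R(1/2) = 2·R(1/2). (That is, for every tie-breaking parameter β ∈ [0,1], the median badge mechanism, whose expected per-user contribution is (1/2)·R(1/2), achieves a 4-approximation to the contribution of the optimal mechanism.) -/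
open MeasureTheory intervalIntegral

/-!
On `[0, κ*]` the derivative `R'` is nonnegative and on `[κ*, 1]` it is nonpositive, so an
allocation `0 ≤ x ≤ 1` collects at most `∫₀^κ* R' = R κ*`. Concavity and `R 0 = R 1 = 0`
give `R (1/2) ≥ R κ* / 2`: the point `1/2` lies on the segment from `κ*` to the farther
endpoint, at least halfway towards `κ*`.
-/

namespace ConcaveOn

variable {s : Set ℝ} {f : ℝ → ℝ} {q κ : ℝ}

theorem deriv_nonneg_of_lt_of_le (hf : ConcaveOn ℝ s f) (hq : q ∈ s) (hκ : κ ∈ s)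
    (hqκ : q < κ) (hfq : f q ≤ f κ) (hdf : DifferentiableAt ℝ f q) : 0 ≤ deriv f q := by
  refine le_trans ?_ (hf.slope_le_deriv hq hκ hqκ hdf)
  rw [slope_def_field]
  exact div_nonneg (sub_nonneg.2 hfq) (sub_nonneg.2 hqκ.le)

theorem deriv_nonpos_of_lt_of_le (hf : ConcaveOn ℝ s f) (hκ : κ ∈ s) (hq : q ∈ s)
    (hκq : κ < q) (hfq : f q ≤ f κ) (hdf : DifferentiableAt ℝ f q) : deriv f q ≤ 0 := by
  refine (hf.deriv_le_slope hκ hq hκq hdf).trans ?_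
  rw [slope_def_field]
  exact div_nonpos_of_nonpos_of_nonneg (sub_nonpos.2 hfq) (sub_nonneg.2 hκq.le)

theorem le_two_mul_map_of_half_le {p t : ℝ} (hf : ConcaveOn ℝ s f) (hp : p ∈ s)
    (hκ : κ ∈ s) (hfp : 0 ≤ f p) (hfκ : 0 ≤ f κ) (ht : 1 / 2 ≤ t) (ht₁ : t ≤ 1) :
    f κ ≤ 2 * f (t * κ + (1 - t) * p) := by
  have := hf.2 hκ hp (by linarith) (by linarith) (add_sub_cancel t 1)
  simp only [smul_eq_mul] at this
  nlinarith

theorem le_two_mul_map_half (hf : ConcaveOn ℝ (Set.Icc 0 1) f) (h0 : f 0 = 0) (h1 : f 1 = 0)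
    (hκ : κ ∈ Set.Icc (0 : ℝ) 1) (hfκ : 0 ≤ f κ) : f κ ≤ 2 * f (1 / 2) := by
  obtain ⟨hκ0, hκ1⟩ := hκ
  rcases le_total κ (1 / 2) with hκ_le | hκ_ge
  · have hpos : 0 < 1 - κ := by linarith
    convert hf.le_two_mul_map_of_half_le (t := 1 / (2 * (1 - κ))) (p := 1)
      ⟨zero_le_one, le_rfl⟩ ⟨hκ0, hκ1⟩ h1.ge hfκ ?_ ?_ using 3
    · field_simp; ring
    · rw [div_le_div_iff₀ two_pos (by positivity)]; linarith
    · rw [div_le_one (by positivity)]; linarith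
  · have hpos : 0 < κ := by linarith
    convert hf.le_two_mul_map_of_half_le (t := 1 / (2 * κ)) (p := 0)
      ⟨le_rfl, zero_le_one⟩ ⟨hκ0, hκ1⟩ h0.ge hfκ ?_ ?_ using 3
    · field_simp; ring
    · rw [div_le_div_iff₀ two_pos (by positivity)]; linarith
    · rw [div_le_one (by positivity)]; linarith

theorem integral_deriv_mul_le_sub {g : ℝ → ℝ} {a b : ℝ}
    (hf : ConcaveOn ℝ (Set.Icc a b) f) (hf_diff : DifferentiableOn ℝ f (Set.Icc a b))
    (hκ : κ ∈ Set.Icc a b) (hκ_max : ∀ q ∈ Set.Icc a b, f q ≤ f κ)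
    (hg : ∀ q ∈ Set.Icc a b, g q ∈ Set.Icc (0 : ℝ) 1) :
    ∫ q in a..b, deriv f q * g q ≤ f κ - f a := by
  obtain ⟨haκ, hκb⟩ := hκ
  have hκ_mem : κ ∈ Set.uIcc a b := Set.mem_uIcc_of_le haκ hκb
  have hfa : f a ≤ f κ := hκ_max a ⟨le_rfl, haκ.trans hκb⟩
  by_cases hint : IntervalIntegrable (fun q => deriv f q * g q) volume a b
  swap
  · -- a non-integrable integrand has integral `0` by convention
    rw [integral_undef hint]
    linarith
  have hdiffAt : ∀ q ∈ Set.Ioo a b, DifferentiableAt ℝ f q := fun q hq =>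
    (hf_diff q (Set.Ioo_subset_Icc_self hq)).differentiableAt (Icc_mem_nhds hq.1 hq.2)
  have h_left : ∫ q in a..κ, deriv f q * g q ≤ f κ - f a := by
    refine integral_le_sub_of_hasDeriv_right_of_le haκ
      (hf_diff.continuousOn.mono (Set.Icc_subset_Icc_right hκb))
      (fun q hq => (hdiffAt q ⟨hq.1, hq.2.trans_le hκb⟩).hasDerivAt.hasDerivWithinAt)
      ((intervalIntegrable_iff_integrableOn_Icc_of_le haκ).1
        (hint.mono_set (Set.uIcc_subset_uIcc_left hκ_mem)))
      fun q hq => ?_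
    have hq' : q ∈ Set.Icc a b := ⟨hq.1.le, hq.2.le.trans hκb⟩
    exact mul_le_of_le_one_right
      (hf.deriv_nonneg_of_lt_of_le hq' ⟨haκ, hκb⟩ hq.2 (hκ_max q hq')
        (hdiffAt q ⟨hq.1, hq.2.trans_le hκb⟩))
      (hg q hq').2
  have h_right : ∫ q in κ..b, deriv f q * g q ≤ 0 := by
    rw [integral_of_le hκb, ← setIntegral_congr_set Ioo_ae_eq_Ioc]
    refine setIntegral_nonpos measurableSet_Ioo fun q hq => ?_
    have hq' : q ∈ Set.Icc a b := ⟨haκ.trans hq.1.le, hq.2.le⟩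
    exact mul_nonpos_of_nonpos_of_nonneg
      (hf.deriv_nonpos_of_lt_of_le ⟨haκ, hκb⟩ hq' hq.1 (hκ_max q hq')
        (hdiffAt q ⟨haκ.trans_lt hq.1, hq.2⟩))
      (hg q hq').1
  rw [← integral_add_adjacent_intervals
    (hint.mono_set (Set.uIcc_subset_uIcc_left hκ_mem))
    (hint.mono_set (Set.uIcc_subset_uIcc_right hκ_mem))]
  linarith

end ConcaveOn

theorem median_mechanism_four_approx_tie_breaking_general
    (R : ℝ → ℝ)
    (hR_diff : DifferentiableOn ℝ R (Set.Icc 0 1))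
    (hR_concave : ConcaveOn ℝ (Set.Icc 0 1) R)
    (hR0 : R 0 = 0) (hR1 : R 1 = 0)
    (κstar : ℝ) (hκ : κstar ∈ Set.Icc (0:ℝ) 1)
    (hκ_max : ∀ q ∈ Set.Icc (0:ℝ) 1, R q ≤ R κstar)
    (x : ℝ → ℝ)
    (hx_mem : ∀ q ∈ Set.Icc (0:ℝ) 1, x q ∈ Set.Icc (0:ℝ) 1) :
    (∫ q in (0:ℝ)..1, deriv R q * x q) ≤ 4 * ((1/2) * R (1/2)) := by
  have hRκ : 0 ≤ R κstar := hR0 ▸ hκ_max 0 ⟨le_rfl, zero_le_one⟩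
  calc (∫ q in (0:ℝ)..1, deriv R q * x q) ≤ R κstar - R 0 :=
        hR_concave.integral_deriv_mul_le_sub hR_diff hκ hκ_max hx_mem
    _ = R κstar := by rw [hR0, sub_zero]
    _ ≤ 2 * R (1 / 2) := hR_concave.le_two_mul_map_half hR0 hR1 hκ hRκ
    _ = 4 * ((1/2) * R (1/2)) := by ring

theorem median_mechanism_four_approx_tie_breaking
    (R : ℝ → ℝ)
    (hR_diff : DifferentiableOn ℝ R (Set.Icc 0 1))
    (hR_concave : ConcaveOn ℝ (Set.Icc 0 1) R)
    (hR0 : R 0 = 0) (hR1 : R 1 = 0)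
    (κstar : ℝ) (hκ : κstar ∈ Set.Icc (0:ℝ) 1)
    (hκ_max : ∀ q ∈ Set.Icc (0:ℝ) 1, R q ≤ R κstar)
    (x : ℝ → ℝ) (hx_meas : Measurable x)
    (hx_mem : ∀ q ∈ Set.Icc (0:ℝ) 1, x q ∈ Set.Icc (0:ℝ) 1) :
    (∫ q in (0:ℝ)..1, deriv R q * x q) ≤ 4 * ((1/2) * R (1/2)) :=
  median_mechanism_four_approx_tie_breaking_general R hR_diff hR_concave hR0 hR1 κstar hκ hκ_max x
    hx_mem
end

section
/- Let n ≥ 2 be an integer and let w : {1,…,n} → ℝ be nonincreasing (w_1 ≥ w_2 ≥ … ≥ w_n). For a badge assignment r : {1,…,n} → ℕ and each i, let n_g(i,r) = |{j ≠ i : r_j > r_i}| and n_e(i,r) = |{j ≠ i : r_j = r_i}|, and define σ_i(r) = 1 − n_g(i,r)/(n−1) − (1/2)·n_e(i,r)/(n−1). Then for every badge assignment r, ∑_{i=1}^{n} w_i·σ_i(r) ≤ ∑_{i=1}^{n} w_i·(1 − (i−1)/(n−1)); that is, assigning all users distinct badges in decreasing order of weight maximizes the virtual surplus when ties are split with parameter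 β = 1/2. -/
open Finset

/-- Status value of user `i` under badge assignment `r` with tie-breaking parameter
`β = 1/2`: `1 - n_g/(n-1) - (1/2)·n_e/(n-1)`, where `n_g` counts other users with a
strictly higher badge and `n_e` counts other users with an equal badge. -/
noncomputable def statusHalfTies (n : ℕ) (r : Fin n → ℕ) (i : Fin n) : ℝ :=
  1 - ((Finset.univ.filter (fun j => j ≠ i ∧ r i < r j)).card : ℝ) / (n - 1)
    - (1/2) * ((Finset.univ.filter (fun j => j ≠ i ∧ r j = r i)).card : ℝ) / (n - 1)

/-!
Write the status of user `i` as `1 - (∑ j, d i j - 1/2) / (n - 1)`, where `d i j ∈ {0, 1/2, 1}`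
is what `i` loses against `j`. Since `d i j + d j i = 1`, the weighted sum
`∑ i, w i * ∑ j, d i j` splits into pairs, and for `i < j` the pair contributes
`w i * d i j + w j * d j i ≥ w j`, which is what it contributes under the distinct ranking in
order of weight (the badges `OrderDual.toDual`, under which user `i` has exactly `i` users above).
-/

theorem Finset.sum_sum_le_sum_sum_of_add_swap_le {ι β : Type*} [AddCommMonoid β]
    [LinearOrder β] [IsOrderedCancelAddMonoid β] (s : Finset ι) {a b : ι → ι → β}
    (h : ∀ i ∈ s, ∀ j ∈ s, a i j + a j i ≤ b i j + b j i) :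
    ∑ i ∈ s, ∑ j ∈ s, a i j ≤ ∑ i ∈ s, ∑ j ∈ s, b i j := by
  have symm (c : ι → ι → β) : ∑ i ∈ s, ∑ j ∈ s, (c i j + c j i)
      = ∑ i ∈ s, ∑ j ∈ s, c i j + ∑ i ∈ s, ∑ j ∈ s, c i j := by
    simp only [sum_add_distrib]
    rw [sum_comm (f := fun i j => c j i)]
  have hsum := sum_le_sum fun i hi => sum_le_sum fun j hj => h i hi j hj
  rw [symm, symm] at hsum
  exact le_of_not_gt fun hlt => (add_lt_add hlt hlt).not_ge hsum

section HalfTieDeficit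

variable {ι α : Type*} [LinearOrder α]

/-- The diagonal value `halfTieDeficit r i i = 1/2` is kept in the sums below, hence the `- 1/2`
in `statusHalfTies_eq`. -/
noncomputable def halfTieDeficit (r : ι → α) (i j : ι) : ℝ :=
  if r i < r j then 1 else if r i = r j then 1 / 2 else 0

theorem halfTieDeficit_self (r : ι → α) (i : ι) : halfTieDeficit r i i = 1 / 2 := by
  simp [halfTieDeficit]

theorem halfTieDeficit_nonneg (r : ι → α) (i j : ι) : 0 ≤ halfTieDeficit r i j := by
  unfold halfTieDeficit; split_ifs <;> norm_num

theorem halfTieDeficit_add_swap (r : ι → α) (i j : ι) :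
    halfTieDeficit r i j + halfTieDeficit r j i = 1 := by
  unfold halfTieDeficit
  rcases lt_trichotomy (r i) (r j) with h | h | h
  · simp [h, h.ne', h.not_gt]
  · norm_num [h]
  · simp [h, h.ne', h.not_gt]

theorem sum_halfTieDeficit [Fintype ι] [DecidableEq ι] (r : ι → α) (i : ι) :
    ∑ j, halfTieDeficit r i j
      = #{j | j ≠ i ∧ r i < r j} + 1 / 2 * #{j | j ≠ i ∧ r j = r i} + 1 / 2 := by
  have h (j : ι) : halfTieDeficit r i j = (if j ≠ i ∧ r i < r j then 1 else 0)
      + 1 / 2 * (if j ≠ i ∧ r j = r i then 1 else 0) + if i = j then 1 / 2 else 0 := by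
    by_cases hj : j = i
    · subst hj; simp [halfTieDeficit]
    · unfold halfTieDeficit
      rcases lt_trichotomy (r i) (r j) with h | h | h
      · simp [hj, h, h.ne', Ne.symm hj]
      · simp [hj, h, Ne.symm hj]
      · simp [hj, h.not_gt, h.ne, h.ne', Ne.symm hj]
  simp only [h, sum_add_distrib, ← mul_sum, sum_boole, sum_ite_eq, mem_univ, if_true]

variable [LinearOrder ι]

theorem sum_halfTieDeficit_toDual [Fintype ι] [LocallyFiniteOrderBot ι] (i : ι) :
    ∑ j, halfTieDeficit OrderDual.toDual i j = #(Iio i) + 1 / 2 := by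
  have h (j : ι) : halfTieDeficit OrderDual.toDual i j
      = (if j < i then 1 else 0) + if i = j then 1 / 2 else 0 := by
    unfold halfTieDeficit
    rcases lt_trichotomy i j with h | rfl | h
    · simp [h.not_gt, h.ne]
    · simp
    · simp [h, h.ne']
  simp [h, sum_add_distrib, sum_boole, Finset.filter_gt_eq_Iio]

theorem halfTieDeficit_toDual_add_le {w : ι → ℝ} (hw : Antitone w) (r : ι → α) (i j : ι) :
    w i * halfTieDeficit OrderDual.toDual i j + w j * halfTieDeficit OrderDual.toDual j i
      ≤ w i * halfTieDeficit r i j + w j * halfTieDeficit r j i := by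
  wlog hij : i ≤ j generalizing i j
  · linarith [this j i (le_of_not_ge hij)]
  rcases hij.lt_or_eq with hlt | rfl
  · have hlose : halfTieDeficit OrderDual.toDual i j = 0 := by
      simp [halfTieDeficit, hlt.not_gt, hlt.ne]
    have hwin : halfTieDeficit OrderDual.toDual j i = 1 := by simp [halfTieDeficit, hlt]
    rw [hlose, hwin, ← halfTieDeficit_add_swap r i j]
    nlinarith [mul_nonneg (halfTieDeficit_nonneg r i j) (sub_nonneg.2 (hw hij))]
  · simp only [halfTieDeficit_self, le_refl]

theorem sum_mul_sum_halfTieDeficit_toDual_le [Fintype ι] {w : ι → ℝ} (hw : Antitone w)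
    (r : ι → α) :
    ∑ i, w i * ∑ j, halfTieDeficit OrderDual.toDual i j
      ≤ ∑ i, w i * ∑ j, halfTieDeficit r i j := by
  simp only [mul_sum]
  exact sum_sum_le_sum_sum_of_add_swap_le _ fun i _ j _ => halfTieDeficit_toDual_add_le hw r i j

end HalfTieDeficit

theorem statusHalfTies_eq (n : ℕ) (r : Fin n → ℕ) (i : Fin n) :
    statusHalfTies n r i = 1 - (∑ j, halfTieDeficit r i j - 1 / 2) / (n - 1) := by
  rw [sum_halfTieDeficit, statusHalfTies]
  ring

theorem distinct_badges_optimal_half_ties_general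
    (n : ℕ)
    (w : Fin n → ℝ)
    (hw_anti : ∀ i j : Fin n, i ≤ j → w j ≤ w i) :
    ∀ r : Fin n → ℕ,
      ∑ i, w i * statusHalfTies n r i ≤ ∑ i, w i * (1 - (i : ℕ) / (n - 1)) := by
  intro r
  obtain rfl | hn := n.eq_zero_or_pos
  · simp
  have hc : (0 : ℝ) ≤ n - 1 := by
    rw [sub_nonneg]; exact_mod_cast hn
  have key := sum_mul_sum_halfTieDeficit_toDual_le hw_anti r
  simp only [sum_halfTieDeficit_toDual, Fin.card_Iio] at key
  have hsurplus (x : Fin n → ℝ) :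
      ∑ i, w i * (1 - x i / (n - 1)) = ∑ i, w i - (∑ i, w i * x i) / (n - 1) := by
    simp only [mul_sub, mul_one, sum_sub_distrib, mul_div_assoc', sum_div]
  calc ∑ i, w i * statusHalfTies n r i
      = ∑ i, w i - (∑ i, w i * (∑ j, halfTieDeficit r i j - 1 / 2)) / (n - 1) := by
        simp only [statusHalfTies_eq, hsurplus]
    _ ≤ ∑ i, w i - (∑ i, w i * ((i : ℕ) + 1 / 2 - 1 / 2)) / (n - 1) := by
        gcongr ?_ - ?_ / _
        simp only [mul_sub, sum_sub_distrib]
        linarith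
    _ = ∑ i, w i * (1 - (i : ℕ) / (n - 1)) := by
        simp only [add_sub_cancel_right, hsurplus]

theorem distinct_badges_optimal_half_ties
    (n : ℕ) (hn : 2 ≤ n)
    (w : Fin n → ℝ)
    (hw_anti : ∀ i j : Fin n, i ≤ j → w j ≤ w i) :
    ∀ r : Fin n → ℕ,
      ∑ i, w i * statusHalfTies n r i ≤ ∑ i, w i * (1 - (i : ℕ) / (n - 1)) :=
  distinct_badges_optimal_half_ties_general n w hw_anti
end
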